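/- arXiv:1305.1208 — 5 statements merged into one kernel-verified Lean document; each statement's English description precedes it below -/
import Mathlib

section
/- The map Φ : C([0,∞), ℝ) × C↑([0,∞), ℝ) → C([0,∞), ℝ) defined by Φ(x,y)(t) = ∫₀ᵗ x(s) dy(s) (Stieltjes integral) is continuous, where C↑([0,∞)) denotes the set of increasing continuous functions and all spaces carry the topology of locally uniform convergence. -/
/-!
Split `Φ(x_N, y_N) - Φ(x, y)` as `∫ (x_N - x) dy_N + (∫ x dy_N - ∫ x dy)`. The first term is at
most `sup |x_N - x| · (y_N T - y_N 0)` on `[0, T]`, and these masses stay bounded. For the second,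
`x` is uniformly continuous on `[0, T]`, so over any partition of `(0, t]` of small mesh, `∫₀ᵗ x dy`
is close to the left Riemann–Stieltjes sum `∑ x(cᵢ) (y(cᵢ₊₁) - y(cᵢ))`, uniformly in `t` and for
`y_N` as well. Clipping one fixed partition of `[0, T]` at `t` keeps the number `n` of cells
independent of `t`, so the Riemann sums for `y_N` and `y` differ by at most
`n · sup |x| · 2 sup |y_N - y|`.
-/

open MeasureTheory Filter

/-- The Stieltjes measure `dy` associated with a monotone continuous function `y`. -/
noncomputable def stieltjesMeasureOf (y : ℝ → ℝ) (hm : Monotone y) (hc : Continuous y) :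
    Measure ℝ :=
  StieltjesFunction.measure ⟨y, hm, fun _ => hc.continuousWithinAt⟩

/-- The map `Φ(x, y)(t) = ∫₀ᵗ x(s) dy(s)`. -/
noncomputable def stieltjesIntegral (x y : ℝ → ℝ) (hm : Monotone y) (hc : Continuous y)
    (t : ℝ) : ℝ :=
  ∫ s in Set.Ioc (0 : ℝ) t, x s ∂(stieltjesMeasureOf y hm hc)

open Set

def riemannStieltjesSum (F f : ℝ → ℝ) (c : ℕ → ℝ) (n : ℕ) : ℝ :=
  ∑ i ∈ Finset.range n, f (c i) * (F (c (i + 1)) - F (c i))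

theorem abs_riemannStieltjesSum_sub_le {F G f : ℝ → ℝ} {c : ℕ → ℝ} {n : ℕ} {C η : ℝ}
    (hf : ∀ i < n, |f (c i)| ≤ C) (hFG : ∀ i ≤ n, |F (c i) - G (c i)| ≤ η) :
    |riemannStieltjesSum F f c n - riemannStieltjesSum G f c n| ≤ n * (C * (2 * η)) := by
  rw [riemannStieltjesSum, riemannStieltjesSum, ← Finset.sum_sub_distrib]
  calc _ ≤ _ := Finset.abs_sum_le_sum_abs _ _
    _ ≤ ∑ _ ∈ Finset.range n, C * (2 * η) := Finset.sum_le_sum fun i hi => ?_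
    _ = n * (C * (2 * η)) := by rw [Finset.sum_const, Finset.card_range, nsmul_eq_mul]
  have hi := Finset.mem_range.1 hi
  have hdiff : |F (c (i + 1)) - F (c i) - (G (c (i + 1)) - G (c i))| ≤ 2 * η := by
    have h₁ := hFG (i + 1) hi
    have h₂ := hFG i hi.le
    rw [abs_le] at h₁ h₂ ⊢
    constructor <;> linarith
  rw [← mul_sub, abs_mul]
  exact mul_le_mul (hf i hi) hdiff (abs_nonneg _) ((abs_nonneg _).trans (hf i hi))

theorem exists_monotone_partition_of_mesh_le {a t h : ℝ} {n : ℕ} (hat : a ≤ t) (hh : 0 ≤ h)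
    (hn : t - a ≤ n * h) :
    ∃ c : ℕ → ℝ, Monotone c ∧ c 0 = a ∧ c n = t ∧ (∀ i, c i ∈ Icc a t) ∧
      ∀ i, c (i + 1) - c i ≤ h := by
  refine ⟨fun i => min (a + i * h) t, fun i j hij => ?_, by simpa using hat,
    min_eq_right (by linarith), fun i => ⟨le_min ?_ hat, min_le_right _ _⟩, fun i => ?_⟩
  · have : (i : ℝ) * h ≤ j * h := mul_le_mul_of_nonneg_right (by exact_mod_cast hij) hh
    exact min_le_min_right _ (by linarith)
  · have : 0 ≤ (i : ℝ) * h := by positivity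
    linarith
  · have : min (a + ↑(i + 1) * h) t ≤ min (a + i * h) t + h := by
      rw [← min_add_add_right]
      exact min_le_min (by push_cast; linarith) (by linarith)
    push_cast at this ⊢
    linarith

namespace StieltjesFunction

variable (F : StieltjesFunction ℝ)

theorem measureReal_Ioc {a b : ℝ} (hab : a ≤ b) : F.measure.real (Ioc a b) = F b - F a := by
  rw [measureReal_def, F.measure_Ioc, ENNReal.toReal_ofReal (sub_nonneg.2 (F.mono hab))]

theorem abs_setIntegral_Ioc_sub_le {f g : ℝ → ℝ} {a b d : ℝ} (hab : a ≤ b)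
    (hf : IntegrableOn f (Ioc a b) F.measure) (hg : IntegrableOn g (Ioc a b) F.measure)
    (hfg : ∀ u ∈ Ioc a b, |f u - g u| ≤ d) :
    |∫ u in Ioc a b, f u ∂F.measure - ∫ u in Ioc a b, g u ∂F.measure| ≤ d * (F b - F a) := by
  rw [← integral_sub hf hg, ← F.measureReal_Ioc hab]
  exact norm_setIntegral_le_of_norm_le_const (F.measure_Ioc a b ▸ ENNReal.ofReal_lt_top)
    fun u hu => (Real.norm_eq_abs _).trans_le (hfg u hu)

theorem abs_setIntegral_sub_riemannStieltjesSum_le {f : ℝ → ℝ} {c : ℕ → ℝ} {n : ℕ} {δ : ℝ}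
    (hc : Monotone c) (hf : IntegrableOn f (Ioc (c 0) (c n)) F.measure)
    (hδ : ∀ i < n, ∀ u ∈ Ioc (c i) (c (i + 1)), |f u - f (c i)| ≤ δ) :
    |∫ u in Ioc (c 0) (c n), f u ∂F.measure - riemannStieltjesSum F f c n|
      ≤ δ * (F (c n) - F (c 0)) := by
  have hfi : ∀ i < n, IntegrableOn f (Ioc (c i) (c (i + 1))) F.measure := fun i hi =>
    hf.mono_set (Ioc_subset_Ioc (hc (Nat.zero_le i)) (hc hi))
  have hsplit := intervalIntegral.sum_integral_adjacent_intervals (μ := F.measure) (f := f)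
    (a := c) fun i hi =>
      (intervalIntegrable_iff_integrableOn_Ioc_of_le (hc i.le_succ)).2 (hfi i hi)
  rw [intervalIntegral.integral_of_le (hc (Nat.zero_le n))] at hsplit
  rw [← hsplit, riemannStieltjesSum, ← Finset.sum_sub_distrib,
    ← Finset.sum_range_sub (fun i => F (c i)), Finset.mul_sum]
  refine (Finset.abs_sum_le_sum_abs _ _).trans (Finset.sum_le_sum fun i hi => ?_)
  have hi := Finset.mem_range.1 hi
  have hconst : f (c i) * (F (c (i + 1)) - F (c i))
      = ∫ _ in Ioc (c i) (c (i + 1)), f (c i) ∂F.measure := by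
    rw [setIntegral_const, F.measureReal_Ioc (hc i.le_succ), smul_eq_mul, mul_comm]
  rw [intervalIntegral.integral_of_le (hc i.le_succ), hconst]
  exact F.abs_setIntegral_Ioc_sub_le (hc i.le_succ) (hfi i hi)
    (integrableOn_const (F.measure_Ioc _ _ ▸ ENNReal.ofReal_ne_top)) (hδ i hi)

theorem abs_setIntegral_sub_setIntegral_le_of_partition (G : StieltjesFunction ℝ) {f : ℝ → ℝ}
    {c : ℕ → ℝ} {n : ℕ} {δ C η : ℝ} (hc : Monotone c)
    (hfF : IntegrableOn f (Ioc (c 0) (c n)) F.measure)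
    (hfG : IntegrableOn f (Ioc (c 0) (c n)) G.measure)
    (hδ : ∀ i < n, ∀ u ∈ Ioc (c i) (c (i + 1)), |f u - f (c i)| ≤ δ)
    (hC : ∀ i < n, |f (c i)| ≤ C) (hFG : ∀ i ≤ n, |F (c i) - G (c i)| ≤ η) :
    |∫ u in Ioc (c 0) (c n), f u ∂F.measure - ∫ u in Ioc (c 0) (c n), f u ∂G.measure|
      ≤ δ * (F (c n) - F (c 0) + (G (c n) - G (c 0))) + n * (C * (2 * η)) := by
  have hF := abs_le.1 (F.abs_setIntegral_sub_riemannStieltjesSum_le hc hfF hδ)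
  have hG := abs_le.1 (G.abs_setIntegral_sub_riemannStieltjesSum_le hc hfG hδ)
  have hsum := abs_le.1 (abs_riemannStieltjesSum_sub_le hC hFG)
  rw [abs_le]
  constructor <;> linarith

theorem tendstoUniformlyOn_setIntegral_Ioc_of_continuousOn {ι : Type*} {l : Filter ι}
    {F : ι → StieltjesFunction ℝ} {G : StieltjesFunction ℝ} {f : ℝ → ℝ} {a b : ℝ}
    (hf : ContinuousOn f (Icc a b)) (hFG : TendstoUniformlyOn (fun i => ⇑(F i)) G l (Icc a b)) :
    TendstoUniformlyOn (fun i t => ∫ u in Ioc a t, f u ∂(F i).measure)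
      (fun t => ∫ u in Ioc a t, f u ∂G.measure) l (Icc a b) := by
  rw [Metric.tendstoUniformlyOn_iff]
  intro ε hε
  by_cases hab : a ≤ b
  swap
  · simp [Icc_eq_empty hab]
  obtain ⟨C, hC⟩ := isCompact_Icc.exists_bound_of_continuousOn hf
  have hC0 : 0 ≤ C := (norm_nonneg _).trans (hC a ⟨le_rfl, hab⟩)
  obtain ⟨δ, hδ, hδε⟩ := exists_pos_mul_lt (half_pos hε) (2 * (G b - G a) + 2)
  obtain ⟨r, hr, hfr⟩ := Metric.uniformContinuousOn_iff.1
    (isCompact_Icc.uniformContinuousOn_of_continuous hf) δ hδ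
  obtain ⟨n, hn⟩ := exists_nat_gt ((b - a) / (r / 2))
  obtain ⟨η, hη, hηε⟩ := exists_pos_mul_lt (half_pos hε) (2 * n * C)
  filter_upwards [Metric.tendstoUniformlyOn_iff.1 hFG (min 1 η) (lt_min one_pos hη)]
    with i hi t ht
  obtain ⟨c, hc, hc0, hcn, hcmem, hcmesh⟩ :=
    exists_monotone_partition_of_mesh_le (n := n) ht.1 (half_pos hr).le
      (by linarith [ht.2, (div_lt_iff₀ (half_pos hr)).1 hn])
  have hcIcc : ∀ j, c j ∈ Icc a b := fun j => ⟨(hcmem j).1, (hcmem j).2.trans ht.2⟩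
  have hosc : ∀ j < n, ∀ u ∈ Ioc (c j) (c (j + 1)), |f u - f (c j)| ≤ δ := by
    intro j _ u hu
    have hu' : u ∈ Icc a b := ⟨(hcIcc j).1.trans hu.1.le, hu.2.trans (hcIcc (j + 1)).2⟩
    have hdist : dist u (c j) < r := by
      rw [Real.dist_eq, abs_of_pos (sub_pos.2 hu.1)]
      linarith [hcmesh j, hu.2]
    exact (hfr u hu' (c j) (hcIcc j) hdist).le
  have hsub : Ioc (c 0) (c n) ⊆ Icc a b := by
    rw [hc0, hcn]; exact Ioc_subset_Icc_self.trans (Icc_subset_Icc_right ht.2)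
  have hFi : ∀ j, |F i (c j) - G (c j)| ≤ min 1 η := fun j => by
    rw [abs_sub_comm, ← Real.dist_eq]; exact (hi (c j) (hcIcc j)).le
  have hbound := (F i).abs_setIntegral_sub_setIntegral_le_of_partition G hc
    (hf.integrableOn_Icc.mono_set hsub) (hf.integrableOn_Icc.mono_set hsub) hosc
    (fun j _ => (Real.norm_eq_abs _).symm.trans_le (hC _ (hcIcc j))) fun j _ => hFi j
  rw [hc0, hcn] at hbound
  have hmass : F i t - F i a + (G t - G a) ≤ 2 * (G b - G a) + 2 := by
    have h₁ := abs_le.1 ((hFi n).trans (min_le_left _ _))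
    have h₂ := abs_le.1 ((hFi 0).trans (min_le_left _ _))
    rw [hcn] at h₁; rw [hc0] at h₂
    linarith [G.mono ht.2]
  rw [dist_comm, Real.dist_eq]
  calc _ ≤ _ := hbound
    _ ≤ δ * (2 * (G b - G a) + 2) + n * (C * (2 * η)) := by
      gcongr
      exact min_le_right _ _
    _ < ε := by linarith

theorem tendstoUniformlyOn_setIntegral_Ioc {ι : Type*} {l : Filter ι}
    {F : ι → StieltjesFunction ℝ} {G : StieltjesFunction ℝ} {f : ι → ℝ → ℝ} {g : ℝ → ℝ}
    {a b : ℝ} (hf : ∀ i, ContinuousOn (f i) (Icc a b)) (hg : ContinuousOn g (Icc a b))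
    (hfg : TendstoUniformlyOn f g l (Icc a b))
    (hFG : TendstoUniformlyOn (fun i => ⇑(F i)) G l (Icc a b)) :
    TendstoUniformlyOn (fun i t => ∫ u in Ioc a t, f i u ∂(F i).measure)
      (fun t => ∫ u in Ioc a t, g u ∂G.measure) l (Icc a b) := by
  rw [Metric.tendstoUniformlyOn_iff]
  intro ε hε
  obtain ⟨d, hd, hdε⟩ := exists_pos_mul_lt (half_pos hε) (G b - G a + 1)
  filter_upwards [Metric.tendstoUniformlyOn_iff.1
      (tendstoUniformlyOn_setIntegral_Ioc_of_continuousOn hg hFG) _ (half_pos hε),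
    Metric.tendstoUniformlyOn_iff.1 hfg d hd, Metric.tendstoUniformlyOn_iff.1 hFG _ one_half_pos]
    with i hgF hfd hF t ht
  have hab : a ≤ b := ht.1.trans ht.2
  have hint : ∀ h : ℝ → ℝ, ContinuousOn h (Icc a b) → IntegrableOn h (Ioc a t) (F i).measure :=
    fun h hh => hh.integrableOn_Icc.mono_set (Ioc_subset_Icc_self.trans (Icc_subset_Icc_right ht.2))
  have hdiff := (F i).abs_setIntegral_Ioc_sub_le (d := d) ht.1 (hint g hg) (hint _ (hf i))
    fun u hu => (hfd u ⟨hu.1.le, hu.2.trans ht.2⟩).le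
  have hFt : F i t - F i a ≤ G b - G a + 1 := by
    have h₁ := abs_lt.1 (hF b ⟨hab, le_rfl⟩)
    have h₂ := abs_lt.1 (hF a ⟨le_rfl, hab⟩)
    linarith [(F i).mono ht.2, h₁.2, h₂.1]
  calc dist _ _ ≤ dist (∫ u in Ioc a t, g u ∂G.measure) (∫ u in Ioc a t, g u ∂(F i).measure)
        + |∫ u in Ioc a t, g u ∂(F i).measure - ∫ u in Ioc a t, f i u ∂(F i).measure| :=
      dist_triangle _ _ _
    _ < ε / 2 + d * (G b - G a + 1) :=
      add_lt_add_of_lt_of_le (hgF t ht) (hdiff.trans (mul_le_mul_of_nonneg_left hFt hd.le))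
    _ < ε := by linarith

end StieltjesFunction

/-- The map `Φ : C([0,∞)) × C↑([0,∞)) → C([0,∞))`,
`Φ(x,y)(t) = ∫₀ᵗ x(s) dy(s)`, is continuous for the topology of locally uniform convergence
(sequential formulation): if `x_N → x` and `y_N → y` locally uniformly, with all `x_N, x`
continuous and all `y_N, y` increasing and continuous, then `Φ(x_N, y_N) → Φ(x, y)` locally
uniformly on `[0,∞)`. -/
theorem stieltjes_integration_map_continuous
    (x : ℝ → ℝ) (hx : Continuous x)
    (y : ℝ → ℝ) (hym : Monotone y) (hyc : Continuous y)
    (xN : ℕ → ℝ → ℝ) (hxN : ∀ N, Continuous (xN N))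
    (yN : ℕ → ℝ → ℝ) (hyNm : ∀ N, Monotone (yN N)) (hyNc : ∀ N, Continuous (yN N))
    (hxconv : TendstoLocallyUniformly xN x atTop)
    (hyconv : TendstoLocallyUniformly yN y atTop) :
    TendstoLocallyUniformlyOn
      (fun N t => stieltjesIntegral (xN N) (yN N) (hyNm N) (hyNc N) t)
      (fun t => stieltjesIntegral x y hym hyc t) atTop (Set.Ici 0) := by
  refine tendstoLocallyUniformlyOn_of_forall_exists_nhds fun s _ => ⟨Icc 0 (s + 1), ?_, ?_⟩
  · exact mem_of_superset (inter_mem_nhdsWithin _ (Iio_mem_nhds (lt_add_one s)))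
      fun u hu => ⟨hu.1, hu.2.le⟩
  · exact StieltjesFunction.tendstoUniformlyOn_setIntegral_Ioc
      (F := fun N => ⟨yN N, hyNm N, fun _ => (hyNc N).continuousWithinAt⟩)
      (G := ⟨y, hym, fun _ => hyc.continuousWithinAt⟩)
      (fun N => (hxN N).continuousOn) hx.continuousOn
      (tendstoLocallyUniformly_iff_forall_isCompact.1 hxconv _ isCompact_Icc)
      (tendstoLocallyUniformly_iff_forall_isCompact.1 hyconv _ isCompact_Icc)
end

section
/- Let H be a continuous piecewise linear function from [0,T] to [0,∞) with slopes ±p, starting and ending at 0. For each level t ≥ 0, the occupation density L_T(t) = lim_{ε↓0} (1/ε) ∫₀ᵀ 1_{t ≤ H(r) < t+ε} dr equals (2/p) times the number of up-crossings of level t by H on [0,T], whenever t is not the height of a local extremum of H. -/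
open MeasureTheory Filter

/-- `H` is continuous piecewise linear on `[0, T]`, with slopes `±p` on finitely many
subintervals. -/
def PiecewiseLinearPM (p : ℝ) (H : ℝ → ℝ) (T : ℝ) : Prop :=
  ∃ (n : ℕ) (t : ℕ → ℝ), 0 < n ∧ t 0 = 0 ∧ t n = T ∧ (∀ i < n, t i < t (i + 1)) ∧
    ∀ i < n,
      (∀ r ∈ Set.Icc (t i) (t (i + 1)), H r = H (t i) + p * (r - t i)) ∨
      (∀ r ∈ Set.Icc (t i) (t (i + 1)), H r = H (t i) - p * (r - t i))

/-- The set of up-crossing times of level `t` by `H` within `[0, T]`: times `r` with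
`H r = t`, `H < t` just before `r` and `H > t` just after `r` (within `[0,T]`). -/
def UpCrossings (H : ℝ → ℝ) (T t : ℝ) : Set ℝ :=
  {r : ℝ | r ∈ Set.Icc (0 : ℝ) T ∧ H r = t ∧
    ∃ δ : ℝ, 0 < δ ∧
      (∀ u ∈ Set.Ioo (r - δ) r ∩ Set.Icc (0 : ℝ) T, H u < t) ∧
      (∀ u ∈ Set.Ioo r (r + δ) ∩ Set.Icc (0 : ℝ) T, t < H u)}

/-!
Cut `[0, T]` into the pieces on which `H` is affine. For small `ε` no breakpoint value lies in
`(t, t + ε)`, so a piece spends time `ε / p` in `[t, t + ε)` when `t` lies between the values at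
its ends and no time otherwise: the density is `1 / p` times the number of pieces crossing `t`.
As `H 0 = H T`, as many pieces cross `t` upwards as downwards, and the upward ones correspond
bijectively to the up-crossings; an up-crossing cannot sit at a breakpoint entered from above,
since that breakpoint would be a local minimum at height `t`.
-/

open Set Topology
open scoped Finset

def HasSlopeOn (H : ℝ → ℝ) (s x y : ℝ) : Prop :=
  ∀ r ∈ Icc x y, H r = H x + s * (r - x)

namespace HasSlopeOn

variable {H : ℝ → ℝ} {s x y t : ℝ}

theorem strictMonoOn (h : HasSlopeOn H s x y) (hs : 0 < s) : StrictMonoOn H (Icc x y) := by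
  intro a ha b hb hab
  rw [h a ha, h b hb]
  nlinarith

theorem strictAntiOn (h : HasSlopeOn H s x y) (hs : s < 0) : StrictAntiOn H (Icc x y) := by
  intro a ha b hb hab
  rw [h a ha, h b hb]
  nlinarith

theorem crossing (h : HasSlopeOn H s x y) (hxy : x ≤ y) (hx : H x ≤ t) (hy : t < H y) :
    0 < s ∧ x + (t - H x) / s ∈ Ico x y ∧ H (x + (t - H x) / s) = t := by
  have hHy := h y ⟨hxy, le_rfl⟩
  have hs : 0 < s := pos_of_mul_pos_left (by linarith) (sub_nonneg.2 hxy)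
  have hlo : x ≤ x + (t - H x) / s := le_add_of_nonneg_right (div_nonneg (by linarith) hs.le)
  have hhi : x + (t - H x) / s < y := by
    have : (t - H x) / s < y - x := (div_lt_iff₀ hs).2 (by linarith)
    linarith
  refine ⟨hs, ⟨hlo, hhi⟩, ?_⟩
  rw [h _ ⟨hlo, hhi.le⟩]
  field_simp
  ring

theorem eqOn_affine (h : HasSlopeOn H s x y) :
    EqOn H (fun r => s * r + (H x - s * x)) (Icc x y) := fun r hr => by
  rw [h r hr]
  ring

theorem measurableSet_Ico_inter_preimage (h : HasSlopeOn H s x y) {I : Set ℝ}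
    (hI : MeasurableSet I) : MeasurableSet (Ico x y ∩ H ⁻¹' I) := by
  rw [(h.eqOn_affine.mono Ico_subset_Icc_self).inter_preimage_eq]
  exact measurableSet_Ico.inter ((by fun_prop : Measurable fun r => s * r + (H x - s * x)) hI)

theorem volume_Ico_inter_preimage (h : HasSlopeOn H s x y) (hs : s ≠ 0) (hxy : x ≤ y)
    (I : Set ℝ) :
    volume (Ico x y ∩ H ⁻¹' I) = ENNReal.ofReal |s|⁻¹ * volume (uIcc (H x) (H y) ∩ I) := by
  set g : ℝ → ℝ := fun r => s * r + (H x - s * x)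
  have hgy : H y = g y := h.eqOn_affine ⟨hxy, le_rfl⟩
  have hg : g = (· + (H x - s * x)) ∘ (s * ·) := rfl
  have hpre : g ⁻¹' uIcc (H x) (H y) = Icc x y := by
    rw [hgy, hg, preimage_comp, preimage_add_const_uIcc, preimage_const_mul_uIcc hs]
    simp [hs, uIcc_of_le hxy]
  calc volume (Ico x y ∩ H ⁻¹' I)
      = volume (Icc x y ∩ g ⁻¹' I) := by
        rw [(h.eqOn_affine.mono Ico_subset_Icc_self).inter_preimage_eq]
        exact measure_congr (Ico_ae_eq_Icc.inter (ae_eq_refl _))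
    _ = volume (g ⁻¹' (uIcc (H x) (H y) ∩ I)) := by rw [preimage_inter, hpre]
    _ = ENNReal.ofReal |s|⁻¹ * volume (uIcc (H x) (H y) ∩ I) := by
        rw [hg, preimage_comp, Real.volume_preimage_mul_left hs, measure_preimage_add_right,
          abs_inv]

end HasSlopeOn

theorem volume_uIcc_inter_Ico {a b t ε : ℝ} (ha : a ∉ Ioo t (t + ε))
    (hb : b ∉ Ioo t (t + ε)) :
    volume (uIcc a b ∩ Ico t (t + ε)) =
      if (a ≤ t ∧ t < b) ∨ (b ≤ t ∧ t < a) then ENNReal.ofReal ε else 0 := by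
  wlog hab : a ≤ b generalizing a b
  · simpa only [uIcc_comm, or_comm] using this hb ha (le_of_not_ge hab)
  rw [uIcc_of_le hab]
  split_ifs with hcross
  · have hup : a ≤ t ∧ t < b := hcross.resolve_right fun h => by linarith [h.1, h.2]
    have hb' : t + ε ≤ b := by
      by_contra! h
      exact hb ⟨hup.2, h⟩
    rw [inter_eq_right.2 (Ico_subset_Icc_self.trans (Icc_subset_Icc hup.1 hb')), Real.volume_Ico,
      add_sub_cancel_left]
  · refine measure_mono_null (fun r ⟨⟨har, hrb⟩, htr, hrt⟩ => ?_) (measure_singleton t)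
    by_contra hne
    have htr' : t < r := lt_of_le_of_ne htr (Ne.symm hne)
    by_cases hat : a ≤ t
    · exact hcross (Or.inl ⟨hat, htr'.trans_le hrb⟩)
    · exact ha ⟨not_le.1 hat, har.trans_lt hrt⟩

theorem eventually_forall_notMem_Ioo {ι : Type*} (I : Finset ι) (f : ι → ℝ) (t : ℝ) :
    ∀ᶠ ε in 𝓝[>] 0, ∀ i ∈ I, f i ∉ Ioo t (t + ε) := by
  rw [Filter.eventually_all_finset]
  intro i _
  by_cases hi : t < f i
  · filter_upwards [Ioo_mem_nhdsGT (sub_pos.2 hi)] with ε hε hmem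
    linarith [hε.2, hmem.2]
  · exact Eventually.of_forall fun ε hmem => hi hmem.1

theorem Monotone.Ico_eq_biUnion_Ico_succ {α : Type*} [LinearOrder α] {τ : ℕ → α}
    (hτ : Monotone τ) (n : ℕ) :
    Ico (τ 0) (τ n) = ⋃ i ∈ Finset.range n, Ico (τ i) (τ (i + 1)) := by
  induction n with
  | zero => simp
  | succ n ih =>
    rw [Finset.range_add_one, Finset.set_biUnion_insert, ← ih, union_comm,
      Ico_union_Ico_eq_Ico (hτ n.zero_le) (hτ n.le_succ)]

theorem measure_Ico_inter_eq_sum {α : Type*} [LinearOrder α] [MeasurableSpace α]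
    (μ : Measure α) {τ : ℕ → α} (hτ : Monotone τ) (n : ℕ) {S : Set α}
    (hS : ∀ i < n, MeasurableSet (Ico (τ i) (τ (i + 1)) ∩ S)) :
    μ (Ico (τ 0) (τ n) ∩ S) = ∑ i ∈ Finset.range n, μ (Ico (τ i) (τ (i + 1)) ∩ S) := by
  rw [hτ.Ico_eq_biUnion_Ico_succ, iUnion₂_inter, measure_biUnion_finset]
  · intro i _ j _ hij
    exact (hτ.pairwise_disjoint_on_Ico_succ hij).mono inter_subset_left inter_subset_left
  · exact fun i hi => hS i (Finset.mem_range.1 hi)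

noncomputable def upSteps (h : ℕ → ℝ) (t : ℝ) (n : ℕ) : Finset ℕ :=
  {i ∈ Finset.range n | h i ≤ t ∧ t < h (i + 1)}

noncomputable def downSteps (h : ℕ → ℝ) (t : ℝ) (n : ℕ) : Finset ℕ :=
  {i ∈ Finset.range n | h (i + 1) ≤ t ∧ t < h i}

theorem mem_upSteps {h : ℕ → ℝ} {t : ℝ} {n i : ℕ} :
    i ∈ upSteps h t n ↔ i < n ∧ h i ≤ t ∧ t < h (i + 1) := by
  simp [upSteps]

theorem card_upSteps_eq_card_downSteps {h : ℕ → ℝ} {t : ℝ} {n : ℕ} (hn : h n = h 0) :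
    #(upSteps h t n) = #(downSteps h t n) := by
  have hstep : ∀ i, ((if t < h (i + 1) then 1 else 0) - (if t < h i then 1 else 0) : ℤ) =
      (if h i ≤ t ∧ t < h (i + 1) then 1 else 0) - (if h (i + 1) ≤ t ∧ t < h i then 1 else 0) := by
    intro i
    by_cases h₁ : t < h i <;> by_cases h₂ : t < h (i + 1) <;> simp [h₁, h₂, not_le.2, le_of_not_gt]
  have htel := Finset.sum_range_sub (fun i => if t < h i then (1 : ℤ) else 0) n
  simp only [hn, sub_self, hstep, Finset.sum_sub_distrib, Finset.sum_boole] at htel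
  exact_mod_cast sub_eq_zero.1 htel

theorem mem_upCrossings_of {H : ℝ → ℝ} {T t r δ₁ δ₂ : ℝ} (hr : r ∈ Icc 0 T) (hHr : H r = t)
    (hδ₁ : 0 < δ₁) (hbefore : ∀ u ∈ Ioo (r - δ₁) r ∩ Icc 0 T, H u < t)
    (hδ₂ : 0 < δ₂) (hafter : ∀ u ∈ Ioo r (r + δ₂) ∩ Icc 0 T, t < H u) :
    r ∈ UpCrossings H T t := by
  refine ⟨hr, hHr, min δ₁ δ₂, lt_min hδ₁ hδ₂, fun u hu => hbefore u ⟨⟨?_, hu.1.2⟩, hu.2⟩,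
    fun u hu => hafter u ⟨⟨hu.1.1, ?_⟩, hu.2⟩⟩
  · linarith [min_le_left δ₁ δ₂, hu.1.1]
  · linarith [min_le_right δ₁ δ₂, hu.1.2]

theorem right_notMem_upCrossings {H : ℝ → ℝ} {T t : ℝ} (hT : 0 < T)
    (hH : ∀ r ∈ Icc 0 T, 0 ≤ H r) (hHT : H T = 0) : T ∉ UpCrossings H T t := by
  rintro ⟨-, hHt, δ, hδ, hbefore, -⟩
  obtain ⟨u, hu, huT⟩ := exists_between (max_lt (sub_lt_self T hδ) hT)
  have hu0 : u ∈ Icc 0 T := ⟨(le_max_right _ _).trans hu.le, huT.le⟩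
  linarith [hbefore u ⟨⟨(le_max_left _ _).trans_lt hu, huT⟩, hu0⟩, hH u hu0]

theorem isLocalMin_of_hasSlopeOn {H : ℝ → ℝ} {s₁ s₂ x y z : ℝ} (h₁ : HasSlopeOn H s₁ x y)
    (h₂ : HasSlopeOn H s₂ y z) (hs₁ : s₁ ≤ 0) (hs₂ : 0 ≤ s₂) (hxy : x < y) (hyz : y < z) :
    IsLocalMin H y := by
  filter_upwards [Ioo_mem_nhds hxy hyz] with u hu
  rcases le_total u y with huy | hyu
  · rw [h₁ u ⟨hu.1.le, huy⟩, h₁ y ⟨hxy.le, le_rfl⟩]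
    nlinarith
  · rw [h₂ u ⟨hyu, hu.2.le⟩, h₂ y ⟨le_rfl, hyz.le⟩]
    nlinarith

structure IsAffinePartition (H : ℝ → ℝ) (T : ℝ) (n : ℕ) (τ s : ℕ → ℝ) : Prop where
  strictMono : StrictMono τ
  zero_eq : τ 0 = 0
  last_eq : τ n = T
  hasSlopeOn : ∀ i < n, HasSlopeOn H (s i) (τ i) (τ (i + 1))

namespace IsAffinePartition

variable {H : ℝ → ℝ} {T t : ℝ} {n : ℕ} {τ s : ℕ → ℝ}

theorem Icc_subset (hP : IsAffinePartition H T n τ s) {i : ℕ} (hi : i < n) :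
    Icc (τ i) (τ (i + 1)) ⊆ Icc 0 T :=
  Icc_subset_Icc (hP.zero_eq ▸ hP.strictMono.monotone i.zero_le)
    (hP.last_eq ▸ hP.strictMono.monotone hi)

theorem lt_succ (hP : IsAffinePartition H T n τ s) (i : ℕ) : τ i < τ (i + 1) :=
  hP.strictMono i.lt_succ_self

theorem volume_Icc_inter_preimage_Ico {p ε : ℝ} (hP : IsAffinePartition H T n τ s) (hp : 0 < p)
    (hs : ∀ i < n, |s i| = p) (hgap : ∀ i ∈ Finset.range (n + 1), H (τ i) ∉ Ioo t (t + ε)) :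
    volume (Icc 0 T ∩ H ⁻¹' Ico t (t + ε)) =
      (#(upSteps (H ∘ τ) t n) + #(downSteps (H ∘ τ) t n)) * ENNReal.ofReal (ε / p) := by
  have hpiece : ∀ i ∈ Finset.range n, volume (Ico (τ i) (τ (i + 1)) ∩ H ⁻¹' Ico t (t + ε)) =
      if i ∈ upSteps (H ∘ τ) t n ∪ downSteps (H ∘ τ) t n then ENNReal.ofReal (ε / p) else 0 := by
    intro i hi
    have hin := Finset.mem_range.1 hi
    rw [(hP.hasSlopeOn i hin).volume_Ico_inter_preimage (abs_pos.1 (hs i hin ▸ hp))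
        (hP.lt_succ i).le,
      volume_uIcc_inter_Ico (hgap i (Finset.mem_range.2 (by omega)))
        (hgap (i + 1) (Finset.mem_range.2 (by omega))), hs i hin]
    simp only [Finset.mem_union, upSteps, downSteps, Finset.mem_filter, hi, true_and,
      Function.comp_apply]
    split_ifs
    · rw [← ENNReal.ofReal_mul (inv_nonneg.2 hp.le), inv_mul_eq_div]
    · rw [mul_zero]
  have hsteps : upSteps (H ∘ τ) t n ∪ downSteps (H ∘ τ) t n ⊆ Finset.range n :=
    Finset.union_subset (Finset.filter_subset _ _) (Finset.filter_subset _ _)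
  have hdisj : Disjoint (upSteps (H ∘ τ) t n) (downSteps (H ∘ τ) t n) := by
    simp only [upSteps, downSteps, Finset.disjoint_filter]
    intro i _ hup hdown
    linarith [hup.1, hup.2, hdown.1, hdown.2]
  rw [← hP.zero_eq, ← hP.last_eq]
  calc volume (Icc (τ 0) (τ n) ∩ H ⁻¹' Ico t (t + ε))
      = volume (Ico (τ 0) (τ n) ∩ H ⁻¹' Ico t (t + ε)) :=
        measure_congr (Ico_ae_eq_Icc.inter (ae_eq_refl _)).symm
    _ = ∑ i ∈ Finset.range n, volume (Ico (τ i) (τ (i + 1)) ∩ H ⁻¹' Ico t (t + ε)) :=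
        measure_Ico_inter_eq_sum volume hP.strictMono.monotone n fun i hi =>
          (hP.hasSlopeOn i hi).measurableSet_Ico_inter_preimage measurableSet_Ico
    _ = _ := by
        rw [Finset.sum_congr rfl hpiece, Finset.sum_ite_mem, Finset.inter_eq_right.2 hsteps,
          Finset.sum_const, Finset.card_union_of_disjoint hdisj, nsmul_eq_mul]
        push_cast
        rfl

theorem exists_lt_before_crossing (hP : IsAffinePartition H T n τ s) (hs : ∀ i < n, s i ≠ 0)
    (hnotextr : ∀ r ∈ Ioo (0 : ℝ) T, IsLocalExtr H r → H r ≠ t) {i : ℕ} (hi : i < n)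
    (hsi : 0 < s i) {r : ℝ} (hr : r ∈ Ico (τ i) (τ (i + 1))) (hHr : H r = t) :
    ∃ δ > 0, ∀ u ∈ Ioo (r - δ) r ∩ Icc 0 T, H u < t := by
  rcases hr.1.lt_or_eq with hlt | rfl
  · refine ⟨r - τ i, sub_pos.2 hlt, fun u hu => hHr ▸ ?_⟩
    exact (hP.hasSlopeOn i hi).strictMonoOn hsi ⟨by linarith [hu.1.1], (hu.1.2.trans hr.2).le⟩
      ⟨hr.1, hr.2.le⟩ hu.1.2
  obtain _ | k := i
  · exact ⟨1, one_pos, fun u hu => absurd hu.2.1 (by linarith [hP.zero_eq, hu.1.2])⟩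
  have hk : k < n := by omega
  rcases (hs k hk).lt_or_gt with hsk | hsk
  · have hmin := isLocalMin_of_hasSlopeOn (hP.hasSlopeOn k hk) (hP.hasSlopeOn (k + 1) hi) hsk.le
      hsi.le (hP.lt_succ k) (hP.lt_succ (k + 1))
    refine absurd hHr (hnotextr _ ⟨?_, ?_⟩ (Or.inl hmin))
    · exact hP.zero_eq ▸ hP.strictMono k.succ_pos
    · exact hP.last_eq ▸ hP.strictMono hi
  · refine ⟨τ (k + 1) - τ k, sub_pos.2 (hP.lt_succ k), fun u hu => hHr ▸ ?_⟩
    exact (hP.hasSlopeOn k hk).strictMonoOn hsk ⟨by linarith [hu.1.1], hu.1.2.le⟩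
      ⟨(hP.lt_succ k).le, le_rfl⟩ hu.1.2

theorem crossing_mem_upCrossings (hP : IsAffinePartition H T n τ s) (hs : ∀ i < n, s i ≠ 0)
    (hnotextr : ∀ r ∈ Ioo (0 : ℝ) T, IsLocalExtr H r → H r ≠ t) {i : ℕ}
    (hi : i ∈ upSteps (H ∘ τ) t n) : τ i + (t - H (τ i)) / s i ∈ UpCrossings H T t := by
  obtain ⟨hin, hx, hy⟩ := mem_upSteps.1 hi
  obtain ⟨hsi, hmem, hHc⟩ := (hP.hasSlopeOn i hin).crossing (hP.lt_succ i).le hx hy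
  obtain ⟨δ, hδ, hbefore⟩ := hP.exists_lt_before_crossing hs hnotextr hin hsi hmem hHc
  refine mem_upCrossings_of (hP.Icc_subset hin (Ico_subset_Icc_self hmem)) hHc hδ hbefore
    (sub_pos.2 hmem.2) fun u hu => hHc ▸ ?_
  exact (hP.hasSlopeOn i hin).strictMonoOn hsi (Ico_subset_Icc_self hmem)
    ⟨hmem.1.trans hu.1.1.le, by linarith [hu.1.2]⟩ hu.1.1

theorem mem_upSteps_of_mem_upCrossings (hP : IsAffinePartition H T n τ s)
    (hs : ∀ i < n, s i ≠ 0) {r : ℝ} (hr : r ∈ UpCrossings H T t) {i : ℕ} (hi : i < n)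
    (hri : r ∈ Ico (τ i) (τ (i + 1))) :
    i ∈ upSteps (H ∘ τ) t n ∧ τ i + (t - H (τ i)) / s i = r := by
  obtain ⟨-, hHr, δ, hδ, -, hafter⟩ := hr
  have hslope := hP.hasSlopeOn i hi
  have hsi : 0 < s i := by
    refine (hs i hi).lt_or_gt.resolve_left fun hneg => ?_
    obtain ⟨u, hru, hu⟩ := exists_between (lt_min (lt_add_of_pos_right r hδ) hri.2)
    have hu' : u ∈ Icc (τ i) (τ (i + 1)) :=
      ⟨hri.1.trans hru.le, (hu.trans_le (min_le_right _ _)).le⟩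
    have hup := hafter u ⟨⟨hru, hu.trans_le (min_le_left _ _)⟩, hP.Icc_subset hi hu'⟩
    have hdown := hslope.strictAntiOn hneg ⟨hri.1, hri.2.le⟩ hu' hru
    linarith
  have hmono := hslope.strictMonoOn hsi
  refine ⟨mem_upSteps.2 ⟨hi, ?_, ?_⟩, ?_⟩
  · exact hHr ▸ hmono.monotoneOn ⟨le_rfl, (hP.lt_succ i).le⟩ ⟨hri.1, hri.2.le⟩ hri.1
  · exact hHr ▸ hmono ⟨hri.1, hri.2.le⟩ ⟨(hP.lt_succ i).le, le_rfl⟩ hri.2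
  · have := hslope r ⟨hri.1, hri.2.le⟩
    rw [← hHr, this]
    field_simp
    ring

theorem ncard_upCrossings (hP : IsAffinePartition H T n τ s) (hs : ∀ i < n, s i ≠ 0)
    (hT : T ∉ UpCrossings H T t) (hnotextr : ∀ r ∈ Ioo (0 : ℝ) T, IsLocalExtr H r → H r ≠ t) :
    (UpCrossings H T t).ncard = #(upSteps (H ∘ τ) t n) := by
  have hmem : ∀ i ∈ upSteps (H ∘ τ) t n, τ i + (t - H (τ i)) / s i ∈ Ico (τ i) (τ (i + 1)) :=
    fun i hi => by
      obtain ⟨hin, hx, hy⟩ := mem_upSteps.1 hi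
      exact ((hP.hasSlopeOn i hin).crossing (hP.lt_succ i).le hx hy).2.1
  have himage : UpCrossings H T t =
      (fun i => τ i + (t - H (τ i)) / s i) '' ↑(upSteps (H ∘ τ) t n) := by
    refine Subset.antisymm (fun r hr => ?_) ?_
    · have hrT : r ∈ Ico (τ 0) (τ n) := by
        rw [hP.zero_eq, hP.last_eq]
        exact ⟨hr.1.1, hr.1.2.lt_of_ne fun h => hT (h ▸ hr)⟩
      rw [hP.strictMono.monotone.Ico_eq_biUnion_Ico_succ] at hrT
      obtain ⟨i, hi, hri⟩ := mem_iUnion₂.1 hrT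
      exact ⟨i, hP.mem_upSteps_of_mem_upCrossings hs hr (Finset.mem_range.1 hi) hri⟩
    · rintro _ ⟨i, hi, rfl⟩
      exact hP.crossing_mem_upCrossings hs hnotextr hi
  have hinj : InjOn (fun i => τ i + (t - H (τ i)) / s i) ↑(upSteps (H ∘ τ) t n) := by
    intro i hi j hj hij
    by_contra hne
    have hj' := hmem j hj
    rw [← show τ i + (t - H (τ i)) / s i = τ j + (t - H (τ j)) / s j from hij] at hj'
    exact disjoint_left.1 (hP.strictMono.monotone.pairwise_disjoint_on_Ico_succ hne)
      (hmem i hi) hj'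
  rw [himage, hinj.ncard_image, ncard_coe_finset]

end IsAffinePartition

theorem PiecewiseLinearPM.exists_isAffinePartition {p : ℝ} {H : ℝ → ℝ} {T : ℝ} (hp : 0 ≤ p)
    (h : PiecewiseLinearPM p H T) :
    ∃ (n : ℕ) (τ s : ℕ → ℝ), IsAffinePartition H T n τ s ∧ ∀ i < n, |s i| = p := by
  classical
  obtain ⟨n, τ, -, hτ0, hτn, hτ, hpiece⟩ := h
  set τ' : ℕ → ℝ := fun i => if i ≤ n then τ i else T + (i - n)
  have hτ' : ∀ i ≤ n, τ' i = τ i := fun i hi => if_pos hi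
  have hmono : StrictMono τ' := strictMono_nat_of_lt_succ fun i => by
    simp only [τ']
    split_ifs with h₁ h₂ h₂
    · exact hτ i (by omega)
    · obtain rfl : i = n := by omega
      push_cast
      linarith
    · omega
    · push_cast
      linarith
  refine ⟨n, τ', fun i => if HasSlopeOn H p (τ i) (τ (i + 1)) then p else -p,
    ⟨hmono, by rw [hτ' 0 n.zero_le, hτ0], by rw [hτ' n le_rfl, hτn], fun i hi => ?_⟩,
    fun i _ => by dsimp only; split_ifs <;> simp [abs_of_nonneg hp]⟩
  rw [hτ' i hi.le, hτ' (i + 1) hi]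
  split_ifs with hup
  · exact hup
  · intro r hr
    rw [(hpiece i hi).resolve_left hup r hr]
    ring

theorem occupation_density_eq_upcrossings_general
    (p : ℝ) (hp : 0 < p) (H : ℝ → ℝ) (T : ℝ) (hT : 0 < T)
    (hH : PiecewiseLinearPM p H T)
    (hHpos : ∀ r ∈ Set.Icc (0 : ℝ) T, 0 ≤ H r)
    (hH0 : H 0 = 0) (hHT : H T = 0)
    (t : ℝ)
    (hnotextr : ∀ r ∈ Set.Ioo (0 : ℝ) T, IsLocalExtr H r → H r ≠ t)
    (Lt : ℝ)
    (hL : Tendsto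
      (fun ε : ℝ => (1 / ε) *
        (volume {r : ℝ | r ∈ Set.Icc (0 : ℝ) T ∧ H r ∈ Set.Ico t (t + ε)}).toReal)
      (nhdsWithin 0 (Set.Ioi 0)) (nhds Lt)) :
    Lt = (2 / p) * (UpCrossings H T t).ncard := by
  obtain ⟨n, τ, s, hP, hs⟩ := hH.exists_isAffinePartition hp.le
  have hs0 : ∀ i < n, s i ≠ 0 := fun i hi => abs_pos.1 (hs i hi ▸ hp)
  have hcount := hP.ncard_upCrossings hs0 (right_notMem_upCrossings hT hHpos hHT) hnotextr
  have hsteps : #(downSteps (H ∘ τ) t n) = #(upSteps (H ∘ τ) t n) :=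
    (card_upSteps_eq_card_downSteps (by simp [hP.zero_eq, hP.last_eq, hH0, hHT])).symm
  have hdensity : ∀ᶠ ε in 𝓝[>] 0, (1 / ε) *
      (volume {r : ℝ | r ∈ Set.Icc (0 : ℝ) T ∧ H r ∈ Set.Ico t (t + ε)}).toReal =
        2 / p * #(upSteps (H ∘ τ) t n) := by
    filter_upwards [eventually_forall_notMem_Ioo (Finset.range (n + 1)) (H ∘ τ) t,
      self_mem_nhdsWithin] with ε hgap (hε : 0 < ε)
    change 1 / ε * (volume (Icc 0 T ∩ H ⁻¹' Ico t (t + ε))).toReal = _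
    rw [hP.volume_Icc_inter_preimage_Ico hp hs hgap, hsteps, ← Nat.cast_add, ENNReal.toReal_mul,
      ENNReal.toReal_natCast, ENNReal.toReal_ofReal (div_nonneg hε.le hp.le)]
    field_simp
    push_cast
    ring
  rw [tendsto_nhds_unique hL (tendsto_const_nhds.congr' (hdensity.mono fun _ h => h.symm)),
    hcount]

/-- Let `H : [0,T] → [0,∞)` be continuous piecewise linear with slopes `±p`,
with `H 0 = H T = 0`.  For each level `t ≥ 0` which is not the height of a local extremum of
`H`, the occupation density `L_T(t) = lim_{ε↓0} (1/ε) ∫₀ᵀ 1_{t ≤ H(r) < t+ε} dr` equals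
`2/p` times the number of up-crossings of level `t` by `H` on `[0,T]`. -/
theorem occupation_density_eq_upcrossings
    (p : ℝ) (hp : 0 < p) (H : ℝ → ℝ) (T : ℝ) (hT : 0 < T)
    (hH : PiecewiseLinearPM p H T)
    (hHpos : ∀ r ∈ Set.Icc (0 : ℝ) T, 0 ≤ H r)
    (hH0 : H 0 = 0) (hHT : H T = 0)
    (t : ℝ) (ht : 0 ≤ t)
    (hnotextr : ∀ r ∈ Set.Ioo (0 : ℝ) T, IsLocalExtr H r → H r ≠ t)
    (Lt : ℝ)
    (hL : Tendsto
      (fun ε : ℝ => (1 / ε) *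
        (volume {r : ℝ | r ∈ Set.Icc (0 : ℝ) T ∧ H r ∈ Set.Ico t (t + ε)}).toReal)
      (nhdsWithin 0 (Set.Ioi 0)) (nhds Lt)) :
    Lt = (2 / p) * (UpCrossings H T t).ncard :=
  occupation_density_eq_upcrossings_general p hp H T hT hH hHpos hH0 hHT t hnotextr Lt hL
end

section
/- For 0 < a < b, the maps Π^{a,b}, Π^{b,c}, Π^{a,c} defined by time-changing out excursions above the respective level satisfy the compatibility (semigroup) property: Π^{a,b} ∘ Π^{b,c} = Π^{a,c} on C([0,∞), [0,c]) for 0 < a < b < c, for functions u with ∫₀^∞ 1_{u(r) ≤ a} dr = ∞. -/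
open MeasureTheory Filter

/-- The time spent by `u` at or below level `a` up to time `s`:
`ρ_u^a(s) = ∫₀ˢ 1_{u(r) ≤ a} dr`. -/
noncomputable def timeBelow (a : ℝ) (u : ℝ → ℝ) (s : ℝ) : ℝ :=
  (MeasureTheory.volume {r : ℝ | r ∈ Set.Ioc (0 : ℝ) s ∧ u r ≤ a}).toReal

/-- The right-continuous inverse of `ρ_u^a`. -/
noncomputable def timeBelowInv (a : ℝ) (u : ℝ → ℝ) (s : ℝ) : ℝ :=
  sInf {r : ℝ | 0 ≤ r ∧ s < timeBelow a u r}

/-- `Π^a(u)(s) = u ((ρ_u^a)⁻¹ (s))`: the trajectory `u` with its excursions above level `a`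
chopped out. -/
noncomputable def chop (a : ℝ) (u : ℝ → ℝ) : ℝ → ℝ :=
  fun s => u (timeBelowInv a u s)

/-!
Write `ρ_a = timeBelow a u` and `τ_a = timeBelowInv a u`. Since `ρ_a` is 1-Lipschitz and
unbounded, `ρ_a (τ_a s) = s` and `τ_a s < x ↔ s < ρ_a x` for `s ≥ 0`. Comparing distribution
functions shows that `τ_b` pushes Lebesgue measure on `(0, t]` forward to Lebesgue measure on
`{u ≤ b} ∩ (0, τ_b t]`, which gives the time change formula `ρ_a^{Π^b u} = ρ_a^u ∘ τ_b` for
`a ≤ b`, and hence `τ_a^{Π^b u} s = ρ_b (τ_a s)`. Finally `u (τ_a s) ≤ a < b`, so `ρ_b` increases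
strictly to the right of `τ_a s`, and `τ_b (ρ_b (τ_a s)) = τ_a s`.
-/

open Set

section TimeBelow

variable {a : ℝ} {u : ℝ → ℝ}

lemma timeBelow_eq_toReal_restrict (a : ℝ) (u : ℝ → ℝ) (s : ℝ) :
    timeBelow a u s = (volume.restrict {x | u x ≤ a} (Ioc 0 s)).toReal := by
  rw [Measure.restrict_apply measurableSet_Ioc]
  rfl

lemma restrict_Ioc_ne_top (a : ℝ) (u : ℝ → ℝ) (p q : ℝ) :
    volume.restrict {x | u x ≤ a} (Ioc p q) ≠ ⊤ :=
  ((Measure.restrict_le_self _).trans_lt measure_Ioc_lt_top).ne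

lemma restrict_Ioc_zero_eq_ofReal_timeBelow (a : ℝ) (u : ℝ → ℝ) (s : ℝ) :
    volume.restrict {x | u x ≤ a} (Ioc 0 s) = ENNReal.ofReal (timeBelow a u s) := by
  rw [timeBelow_eq_toReal_restrict, ENNReal.ofReal_toReal (restrict_Ioc_ne_top a u 0 s)]

lemma timeBelow_nonneg (a : ℝ) (u : ℝ → ℝ) (s : ℝ) : 0 ≤ timeBelow a u s :=
  ENNReal.toReal_nonneg

lemma timeBelow_of_nonpos {s : ℝ} (hs : s ≤ 0) : timeBelow a u s = 0 := by
  simp [timeBelow_eq_toReal_restrict, Ioc_eq_empty (not_lt.2 hs)]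

lemma timeBelow_sub_timeBelow {p q : ℝ} (hp : 0 ≤ p) (hpq : p ≤ q) :
    timeBelow a u q - timeBelow a u p = (volume.restrict {x | u x ≤ a} (Ioc p q)).toReal := by
  rw [timeBelow_eq_toReal_restrict, timeBelow_eq_toReal_restrict, ← Ioc_union_Ioc_eq_Ioc hp hpq,
    measure_union (Ioc_disjoint_Ioc_of_le le_rfl) measurableSet_Ioc,
    ENNReal.toReal_add (restrict_Ioc_ne_top a u _ _) (restrict_Ioc_ne_top a u _ _),
    add_sub_cancel_left]

lemma monotone_timeBelow (a : ℝ) (u : ℝ → ℝ) : Monotone (timeBelow a u) := fun p q h => by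
  simp only [timeBelow_eq_toReal_restrict]
  exact ENNReal.toReal_mono (restrict_Ioc_ne_top a u _ _) (measure_mono (Ioc_subset_Ioc_right h))

lemma timeBelow_le_add_sub {p q : ℝ} (hpq : p ≤ q) :
    timeBelow a u q ≤ timeBelow a u p + (q - p) := by
  have h : volume.restrict {x | u x ≤ a} (Ioc 0 q) ≤
      volume.restrict {x | u x ≤ a} (Ioc 0 p) + ENNReal.ofReal (q - p) := by
    refine (measure_mono (Ioc_subset_Ioc_union_Ioc (b := p))).trans
      ((measure_union_le _ _).trans ?_)
    gcongr
    exact (Measure.restrict_le_self _).trans Real.volume_Ioc.le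
  rwa [restrict_Ioc_zero_eq_ofReal_timeBelow, restrict_Ioc_zero_eq_ofReal_timeBelow,
    ← ENNReal.ofReal_add (timeBelow_nonneg a u p) (sub_nonneg.2 hpq),
    ENNReal.ofReal_le_ofReal_iff (by linarith [timeBelow_nonneg a u p])] at h

lemma lipschitzWith_timeBelow (a : ℝ) (u : ℝ → ℝ) : LipschitzWith 1 (timeBelow a u) := by
  refine LipschitzWith.of_le_add fun x y => ?_
  rcases le_total x y with h | h
  · exact (monotone_timeBelow a u h).trans (le_add_of_nonneg_right dist_nonneg)
  · exact (timeBelow_le_add_sub h).trans_eq (by rw [Real.dist_eq, abs_of_nonneg (by linarith)])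

end TimeBelow

section TimeBelowInv

variable {a : ℝ} {u : ℝ → ℝ}

lemma timeBelow_lt_timeBelow_of_Ioc_subset {x z : ℝ} (hx : 0 ≤ x) (hxz : x < z)
    (h : Ioc x z ⊆ {w | u w ≤ a}) : timeBelow a u x < timeBelow a u z := by
  have := timeBelow_sub_timeBelow (a := a) (u := u) hx hxz.le
  rw [Measure.restrict_apply measurableSet_Ioc, inter_eq_left.2 h, Real.volume_Ioc,
    ENNReal.toReal_ofReal (sub_nonneg.2 hxz.le)] at this
  linarith

lemma timeBelow_eq_of_Ioc_subset {x z : ℝ} (hx : 0 ≤ x) (hxz : x ≤ z)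
    (h : Ioc x z ⊆ {w | a < u w}) : timeBelow a u z = timeBelow a u x := by
  have hempty : Ioc x z ∩ {w | u w ≤ a} = ∅ :=
    eq_empty_of_forall_notMem fun w ⟨hw, hwa⟩ => absurd hwa (not_le.2 (show a < u w from h hw))
  have := timeBelow_sub_timeBelow (a := a) (u := u) hx hxz
  rw [Measure.restrict_apply measurableSet_Ioc, hempty, measure_empty,
    ENNReal.toReal_zero] at this
  linarith

lemma timeBelow_lt_timeBelow_iff {x y : ℝ} (hu : ContinuousAt u x) (hx : 0 ≤ x)
    (hxa : u x < a) : timeBelow a u x < timeBelow a u y ↔ x < y := by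
  refine ⟨(monotone_timeBelow a u).reflect_lt, fun hxy => ?_⟩
  obtain ⟨z, hxz, hz⟩ := mem_nhdsGT_iff_exists_Ioc_subset.1
    (nhdsWithin_le_nhds (hu.preimage_mem_nhds (Iio_mem_nhds hxa)))
  calc timeBelow a u x < timeBelow a u (min y z) :=
        timeBelow_lt_timeBelow_of_Ioc_subset hx (lt_min hxy hxz)
          fun w hw => (show u w < a from hz (Ioc_subset_Ioc_right (min_le_right y z) hw)).le
    _ ≤ timeBelow a u y := monotone_timeBelow a u (min_le_left y z)

lemma exists_lt_timeBelow (hinf : volume {r : ℝ | 0 ≤ r ∧ u r ≤ a} = ⊤) (s : ℝ) :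
    ∃ r, 0 ≤ r ∧ s < timeBelow a u r := by
  set μ := volume.restrict {x | u x ≤ a}
  have hIoi : μ.restrict (Ioi 0) univ = ⊤ := by
    rw [Measure.restrict_apply MeasurableSet.univ, univ_inter, measure_congr Ioi_ae_eq_Ici,
      Measure.restrict_apply measurableSet_Ici]
    exact hinf
  have hlim := tendsto_measure_Iic_atTop (μ.restrict (Ioi 0))
  rw [hIoi] at hlim
  have hev : ∀ᶠ r in atTop, ENNReal.ofReal s < μ.restrict (Ioi 0) (Iic r) :=
    hlim.eventually (lt_mem_nhds ENNReal.ofReal_lt_top)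
  obtain ⟨r, hr, hr0⟩ := (hev.and (eventually_ge_atTop 0)).exists
  refine ⟨r, hr0, ?_⟩
  rw [Measure.restrict_apply measurableSet_Iic, Iic_inter_Ioi,
    restrict_Ioc_zero_eq_ofReal_timeBelow,
    ENNReal.ofReal_lt_ofReal_iff'] at hr
  exact hr.1

lemma timeBelowInv_nonneg (a : ℝ) (u : ℝ → ℝ) (s : ℝ) : 0 ≤ timeBelowInv a u s :=
  Real.sInf_nonneg fun _ hr => hr.1

lemma timeBelowInv_eq_of_forall {s x : ℝ} (hx : 0 ≤ x)
    (h : ∀ r, 0 ≤ r → (s < timeBelow a u r ↔ x < r)) : timeBelowInv a u s = x := by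
  have hset : {r : ℝ | 0 ≤ r ∧ s < timeBelow a u r} = Ioi x := by
    ext r
    exact ⟨fun hr => (h r hr.1).1 hr.2, fun hr => ⟨hx.trans hr.le, (h r (hx.trans hr.le)).2 hr⟩⟩
  rw [timeBelowInv, hset, csInf_Ioi]

lemma timeBelow_timeBelowInv (hinf : volume {r : ℝ | 0 ≤ r ∧ u r ≤ a} = ⊤) {s : ℝ}
    (hs : 0 ≤ s) : timeBelow a u (timeBelowInv a u s) = s := by
  have hcont := (lipschitzWith_timeBelow a u).continuous
  set S := {r : ℝ | 0 ≤ r ∧ s < timeBelow a u r}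
  have hbdd : BddBelow S := ⟨0, fun _ hr => hr.1⟩
  refine le_antisymm ?_ ?_
  · rcases (timeBelowInv_nonneg a u s).eq_or_lt with h0 | hpos
    · rw [← h0, timeBelow_of_nonpos le_rfl]
      exact hs
    have hmem : timeBelowInv a u s ∈ closure (Ico 0 (timeBelowInv a u s)) := by
      rw [closure_Ico hpos.ne]
      exact right_mem_Icc.2 hpos.le
    have := map_mem_closure hcont hmem (t := Iic s) fun r hr => by
      by_contra! hlt
      exact (csInf_le hbdd ⟨hr.1, not_le.1 hlt⟩).not_gt hr.2
    rwa [closure_Iic] at this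
  · obtain ⟨r, hr⟩ := exists_lt_timeBelow hinf s
    have := map_mem_closure hcont (csInf_mem_closure ⟨r, hr⟩ hbdd) (t := Ioi s) fun r hr => hr.2
    rwa [closure_Ioi] at this

lemma timeBelowInv_lt_iff (hinf : volume {r : ℝ | 0 ≤ r ∧ u r ≤ a} = ⊤) {s x : ℝ}
    (hs : 0 ≤ s) : timeBelowInv a u s < x ↔ s < timeBelow a u x := by
  constructor
  · intro hlt
    obtain ⟨r₀, hr₀⟩ := exists_lt_timeBelow hinf s
    obtain ⟨r, hr, hrx⟩ := (csInf_lt_iff ⟨0, fun _ hr => hr.1⟩ ⟨r₀, hr₀⟩).1 hlt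
    exact hr.2.trans_le (monotone_timeBelow a u hrx.le)
  · intro hlt
    by_contra! hle
    exact (monotone_timeBelow a u hle).not_gt (by rwa [timeBelow_timeBelowInv hinf hs])

lemma timeBelowInv_timeBelow {x : ℝ} (hu : ContinuousAt u x) (hx : 0 ≤ x) (hxa : u x < a) :
    timeBelowInv a u (timeBelow a u x) = x :=
  timeBelowInv_eq_of_forall hx fun _ _ => timeBelow_lt_timeBelow_iff hu hx hxa

lemma apply_timeBelowInv_le (hu : Continuous u) (hinf : volume {r : ℝ | 0 ≤ r ∧ u r ≤ a} = ⊤)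
    {s : ℝ} (hs : 0 ≤ s) : u (timeBelowInv a u s) ≤ a := by
  by_contra! hlt
  set x := timeBelowInv a u s
  obtain ⟨z, hxz, hz⟩ := mem_nhdsGT_iff_exists_Ioc_subset.1
    (nhdsWithin_le_nhds (hu.continuousAt.preimage_mem_nhds (Ioi_mem_nhds hlt)))
  have hflat := timeBelow_eq_of_Ioc_subset (timeBelowInv_nonneg a u s) hxz.le hz
  rw [timeBelow_timeBelowInv hinf hs] at hflat
  exact ((timeBelowInv_lt_iff hinf hs).1 hxz).ne' hflat

end TimeBelowInv

section TimeChange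

variable {a b : ℝ} {u : ℝ → ℝ}

lemma volume_setOf_le_eq_top_of_le (hab : a ≤ b)
    (hinf : volume {r : ℝ | 0 ≤ r ∧ u r ≤ a} = ⊤) : volume {r : ℝ | 0 ≤ r ∧ u r ≤ b} = ⊤ :=
  top_unique (hinf ▸ measure_mono fun _ hr => ⟨hr.1, hr.2.trans hab⟩)

lemma monotone_timeBelowInv (hinf : volume {r : ℝ | 0 ≤ r ∧ u r ≤ b} = ⊤) :
    Monotone (timeBelowInv b u) := fun _ t hst =>
  csInf_le_csInf ⟨0, fun _ hr => hr.1⟩ (exists_lt_timeBelow hinf t)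
    fun _ hr => ⟨hr.1, hst.trans_lt hr.2⟩

lemma map_timeBelowInv_restrict_Ioc (hinf : volume {r : ℝ | 0 ≤ r ∧ u r ≤ b} = ⊤) {t : ℝ}
    (ht : 0 ≤ t) :
    (volume.restrict (Ioc 0 t)).map (timeBelowInv b u) =
      (volume.restrict {x | u x ≤ b}).restrict (Ioc 0 (timeBelowInv b u t)) := by
  have hmeas := (monotone_timeBelowInv hinf).measurable
  refine Measure.ext_of_Iic _ _ fun x => ?_
  rw [Measure.map_apply hmeas measurableSet_Iic, Measure.restrict_apply (hmeas measurableSet_Iic),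
    Measure.restrict_apply measurableSet_Iic, inter_comm (Iic x), Ioc_inter_Iic,
    restrict_Ioc_zero_eq_ofReal_timeBelow, (monotone_timeBelow b u).map_min,
    timeBelow_timeBelowInv hinf ht]
  have hIic : volume (Iic (timeBelow b u x) ∩ Ioc 0 t) =
      ENNReal.ofReal (min t (timeBelow b u x)) := by
    rw [inter_comm, Ioc_inter_Iic, Real.volume_Ioc, sub_zero]
  refine le_antisymm ?_ ?_
  · refine (measure_mono (t := Iic (timeBelow b u x) ∩ Ioc 0 t) fun r hr => ⟨?_, hr.2⟩).trans
      hIic.le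
    rw [mem_Iic, ← timeBelow_timeBelowInv hinf hr.2.1.le]
    exact monotone_timeBelow b u hr.1
  · rw [← hIic, ← measure_congr (Iio_ae_eq_Iic.inter (EventuallyEq.refl _ (Ioc 0 t)))]
    exact measure_mono fun r ⟨hrx, hr⟩ => ⟨((timeBelowInv_lt_iff hinf hr.1.le).2 hrx).le, hr⟩

lemma timeBelow_chop (hab : a ≤ b) (hu : Continuous u)
    (hinf : volume {r : ℝ | 0 ≤ r ∧ u r ≤ b} = ⊤) {t : ℝ} (ht : 0 ≤ t) :
    timeBelow a (chop b u) t = timeBelow a u (timeBelowInv b u t) := by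
  have hset : MeasurableSet {x | u x ≤ a} := measurableSet_le hu.measurable measurable_const
  have hmap : timeBelow a (chop b u) t =
      ((volume.restrict (Ioc 0 t)).map (timeBelowInv b u) {x | u x ≤ a}).toReal := by
    rw [Measure.map_apply (monotone_timeBelowInv hinf).measurable hset,
      Measure.restrict_apply' measurableSet_Ioc, inter_comm]
    rfl
  rw [hmap, map_timeBelowInv_restrict_Ioc hinf ht, Measure.restrict_apply hset,
    Measure.restrict_apply (hset.inter measurableSet_Ioc), timeBelow]
  congr 2
  ext r
  exact ⟨fun ⟨⟨hra, hr⟩, _⟩ => ⟨hr, hra⟩, fun ⟨hr, hra⟩ => ⟨⟨hra, hr⟩, hra.trans hab⟩⟩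

lemma timeBelowInv_chop (hab : a < b) (hu : Continuous u)
    (hinf : volume {r : ℝ | 0 ≤ r ∧ u r ≤ a} = ⊤) {s : ℝ} (hs : 0 ≤ s) :
    timeBelowInv a (chop b u) s = timeBelow b u (timeBelowInv a u s) := by
  have hinfb := volume_setOf_le_eq_top_of_le hab.le hinf
  have hxb : u (timeBelowInv a u s) < b := (apply_timeBelowInv_le hu hinf hs).trans_lt hab
  refine timeBelowInv_eq_of_forall (timeBelow_nonneg b u _) fun r hr => ?_
  rw [timeBelow_chop hab.le hu hinfb hr, ← timeBelowInv_lt_iff hinf hs,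
    ← timeBelow_lt_timeBelow_iff hu.continuousAt (timeBelowInv_nonneg a u s) hxb,
    timeBelow_timeBelowInv hinfb hr]

end TimeChange

theorem chop_semigroup_general
    (a b : ℝ) (hab : a < b)
    (u : ℝ → ℝ) (hu : Continuous u)
    (hinf : MeasureTheory.volume {r : ℝ | 0 ≤ r ∧ u r ≤ a} = ⊤) :
    ∀ s : ℝ, 0 ≤ s → chop a (chop b u) s = chop a u s := by
  intro s hs
  have hxb : u (timeBelowInv a u s) < b := (apply_timeBelowInv_le hu hinf hs).trans_lt hab
  change u (timeBelowInv b u (timeBelowInv a (chop b u) s)) = u (timeBelowInv a u s)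
  rw [timeBelowInv_chop hab hu hinf hs,
    timeBelowInv_timeBelow hu.continuousAt (timeBelowInv_nonneg a u s) hxb]

/-- semigroup property of the chopping maps: for `0 < a < b < c` and any
continuous `u : [0,∞) → [0,c]` with `u 0 = 0` and `∫₀^∞ 1_{u(r) ≤ a} dr = ∞`,
`Π^{a,b} (Π^{b,c} u) = Π^{a,c} u` on `[0,∞)`. -/
theorem chop_semigroup
    (a b c : ℝ) (ha : 0 < a) (hab : a < b) (hbc : b < c)
    (u : ℝ → ℝ) (hu : Continuous u) (hrange : ∀ s : ℝ, u s ∈ Set.Icc 0 c)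
    (hu0 : u 0 = 0)
    (hinf : MeasureTheory.volume {r : ℝ | 0 ≤ r ∧ u r ≤ a} = ⊤) :
    ∀ s : ℝ, 0 ≤ s → chop a (chop b u) s = chop a u s :=
  chop_semigroup_general a b hab u hu hinf
end

section
/- Let G : [0,∞) → ℝ be continuous with G(0) = 0, and let a > 0. Define ψ_j : ℝ → ℝ by ψ_j(x) = |x| if j is odd and ψ_j(x) = a − |x − a| if j is even, and φ_k = ψ_k ∘ ⋯ ∘ ψ_1. Then for every r > 0 there exists k such that φ_{k+j}(G(s)) = φ_k(G(s)) for all 0 ≤ s ≤ r and all j ≥ 1; hence H(s) := lim_{k→∞} φ_k(G(s)) exists, is continuous, takes values in [0,a], and satisfies |H(s) − H(t)| ≤ |G(s) − G(t)| for all s, t. -/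
/-!
After the first reflection the trajectory is nonnegative, and each further pair of reflections
`y ↦ |a - |y - a||` either lands in `[0, a]`, where every reflection is the identity, or lowers
`y` by exactly `2a`. So `|x| ≤ (2m + 1) a` forces the iterates of `x` to be constant from step
`2m + 1` on, uniformly on bounded sets. Every reflection is 1-Lipschitz, hence so is every
iterate and so is their eventual value.
-/

open Filter Topology Set

def reflectStep (a : ℝ) (j : ℕ) (x : ℝ) : ℝ :=
  if Odd j then |x| else a - |x - a|

def reflectIter (a : ℝ) : ℕ → ℝ → ℝ
  | 0, x => x
  | k + 1, x => reflectStep a (k + 1) (reflectIter a k x)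

section Reflection

variable {a x : ℝ}

theorem reflectStep_of_mem_Icc (j : ℕ) (hx : x ∈ Icc 0 a) : reflectStep a j x = x := by
  unfold reflectStep
  split_ifs
  · exact abs_of_nonneg hx.1
  · rw [abs_of_nonpos (by linarith [hx.2])]; ring

theorem lipschitzWith_reflectStep (a : ℝ) (j : ℕ) : LipschitzWith 1 (reflectStep a j) := by
  refine LipschitzWith.of_dist_le_mul fun u v => ?_
  simp only [reflectStep, NNReal.coe_one, one_mul, Real.dist_eq]
  split_ifs
  · exact abs_abs_sub_abs_le_abs_sub u v
  · calc |a - |u - a| - (a - |v - a|)| = |(|v - a| - |u - a|)| := by ring_nf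
      _ ≤ |(v - a) - (u - a)| := abs_abs_sub_abs_le_abs_sub _ _
      _ = |u - v| := by rw [abs_sub_comm]; ring_nf

theorem lipschitzWith_reflectIter (a : ℝ) (k : ℕ) : LipschitzWith 1 (reflectIter a k) := by
  induction k with
  | zero => exact LipschitzWith.id
  | succ k ih =>
    have h := (lipschitzWith_reflectStep a (k + 1)).comp ih
    rwa [one_mul] at h

theorem reflectIter_add_of_mem_Icc {k : ℕ} (hx : reflectIter a k x ∈ Icc 0 a) (j : ℕ) :
    reflectIter a (k + j) x = reflectIter a k x := by
  induction j with
  | zero => rfl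
  | succ j ih => rw [← add_assoc, reflectIter, ih, reflectStep_of_mem_Icc _ hx]

theorem reflectIter_two_mul_add_one_succ (a x : ℝ) (m : ℕ) :
    reflectIter a (2 * (m + 1) + 1) x = |(a - |reflectIter a (2 * m + 1) x - a|)| := by
  have hodd : Odd (2 * (m + 1) + 1) := odd_two_mul_add_one _
  have heven : ¬Odd (2 * m + 1 + 1) := by
    rw [Nat.not_odd_iff_even]; exact ⟨m + 1, by ring⟩
  show reflectStep a _ (reflectStep a (2 * m + 1 + 1) (reflectIter a (2 * m + 1) x)) = _
  rw [reflectStep, reflectStep, if_pos hodd, if_neg heven]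

theorem reflectIter_two_mul_add_one_nonneg (a x : ℝ) (m : ℕ) :
    0 ≤ reflectIter a (2 * m + 1) x := by
  simp only [reflectIter, reflectStep, if_pos (odd_two_mul_add_one m), abs_nonneg]

/-- A pair of reflections either lands in `[0, a]` or moves `y > 3a` down by `2a`. -/
theorem abs_sub_abs_sub_le_max {b y : ℝ} (hy : 0 ≤ y) (h : y ≤ max a b) :
    |(a - |y - a|)| ≤ max a (b - 2 * a) := by
  rcases le_or_gt y a with hya | hya
  · rw [abs_of_nonpos (sub_nonpos.mpr hya), neg_sub, sub_sub_cancel, abs_of_nonneg hy]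
    exact le_max_of_le_left hya
  · have hyb : y ≤ b := by simpa [not_le.mpr hya] using h
    rw [abs_of_pos (sub_pos.mpr hya), le_max_iff, abs_le, abs_le]
    by_cases h3a : y ≤ 3 * a
    · left; constructor <;> linarith
    · right; constructor <;> linarith

theorem reflectIter_two_mul_add_one_le (a x : ℝ) (m : ℕ) :
    reflectIter a (2 * m + 1) x ≤ max a (|x| - 2 * m * a) := by
  induction m with
  | zero => simp [reflectIter, reflectStep]
  | succ m ih =>
    rw [reflectIter_two_mul_add_one_succ]
    convert abs_sub_abs_sub_le_max (reflectIter_two_mul_add_one_nonneg a x m) ih using 2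
    push_cast; ring

theorem reflectIter_two_mul_add_one_mem_Icc {m : ℕ} (hx : |x| ≤ (2 * m + 1) * a) :
    reflectIter a (2 * m + 1) x ∈ Icc 0 a :=
  ⟨reflectIter_two_mul_add_one_nonneg a x m,
    (reflectIter_two_mul_add_one_le a x m).trans (max_le le_rfl (by linarith))⟩

theorem reflectIter_eq_of_abs_le {m k : ℕ} (hx : |x| ≤ (2 * m + 1) * a) (hk : 2 * m + 1 ≤ k) :
    reflectIter a k x = reflectIter a (2 * m + 1) x := by
  obtain ⟨j, rfl⟩ := Nat.exists_eq_add_of_le hk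
  exact reflectIter_add_of_mem_Icc (reflectIter_two_mul_add_one_mem_Icc hx) j

theorem le_two_mul_ceil_div_add_one_mul (ha : 0 < a) (M : ℝ) :
    M ≤ (2 * (⌈M / a⌉₊ : ℝ) + 1) * a := by
  have h := (div_le_iff₀ ha).mp (Nat.le_ceil (M / a))
  nlinarith [(Nat.cast_nonneg ⌈M / a⌉₊ : (0 : ℝ) ≤ _)]

end Reflection

-- Every index `2m + 1` with `|x| ≤ (2m + 1) a` gives the same value.
noncomputable def reflectLimit (a x : ℝ) : ℝ :=
  reflectIter a (2 * ⌈|x| / a⌉₊ + 1) x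

section Limit

variable {a : ℝ}

theorem reflectIter_eq_reflectLimit (ha : 0 < a) {x : ℝ} {k : ℕ}
    (hk : 2 * ⌈|x| / a⌉₊ + 1 ≤ k) :
    reflectIter a k x = reflectLimit a x :=
  reflectIter_eq_of_abs_le (le_two_mul_ceil_div_add_one_mul ha |x|) hk

theorem reflectLimit_mem_Icc (ha : 0 < a) (x : ℝ) : reflectLimit a x ∈ Icc 0 a :=
  reflectIter_two_mul_add_one_mem_Icc (le_two_mul_ceil_div_add_one_mul ha |x|)

theorem tendsto_reflectIter_reflectLimit (ha : 0 < a) (x : ℝ) :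
    Tendsto (fun k => reflectIter a k x) atTop (𝓝 (reflectLimit a x)) :=
  tendsto_const_nhds.congr' <| (eventually_ge_atTop _).mono fun _ hk =>
    (reflectIter_eq_reflectLimit ha hk).symm

theorem lipschitzWith_reflectLimit (ha : 0 < a) : LipschitzWith 1 (reflectLimit a) := by
  refine LipschitzWith.of_dist_le_mul fun u v => ?_
  set k := max (2 * ⌈|u| / a⌉₊ + 1) (2 * ⌈|v| / a⌉₊ + 1)
  rw [← reflectIter_eq_reflectLimit ha (le_max_left _ _ : _ ≤ k),
    ← reflectIter_eq_reflectLimit ha (le_max_right _ _ : _ ≤ k)]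
  exact (lipschitzWith_reflectIter a k).dist_le_mul u v

end Limit

theorem eq_reflectIter {a : ℝ} {ψ φ : ℕ → ℝ → ℝ}
    (hψ : ∀ j x, ψ j x = if Odd j then |x| else a - |x - a|)
    (hφ1 : ∀ x, φ 1 x = ψ 1 x)
    (hφsucc : ∀ k, 1 ≤ k → ∀ x, φ (k + 1) x = ψ (k + 1) (φ k x)) {k : ℕ} (hk : 1 ≤ k) :
    φ k = reflectIter a k := by
  induction k, hk using Nat.le_induction with
  | base => funext x; rw [hφ1, hψ]; rfl
  | succ k hk ih => funext x; rw [hφsucc k hk, hψ, ih]; rfl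

theorem iterated_reflection_into_interval_general
    (a : ℝ) (ha : 0 < a)
    (G : ℝ → ℝ) (hG : Continuous G)
    (ψ : ℕ → ℝ → ℝ)
    (hψ : ∀ j x, ψ j x = if Odd j then |x| else a - |x - a|)
    (φ : ℕ → ℝ → ℝ)
    (hφ1 : ∀ x, φ 1 x = ψ 1 x)
    (hφsucc : ∀ k, 1 ≤ k → ∀ x, φ (k + 1) x = ψ (k + 1) (φ k x)) :
    (∀ r : ℝ, 0 < r → ∃ k : ℕ, 1 ≤ k ∧
      ∀ j : ℕ, ∀ s ∈ Set.Icc (0 : ℝ) r, φ (k + j) (G s) = φ k (G s)) ∧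
    ∃ H : ℝ → ℝ,
      (∀ s : ℝ, 0 ≤ s → Tendsto (fun k => φ k (G s)) atTop (nhds (H s))) ∧
      ContinuousOn H (Set.Ici 0) ∧
      (∀ s : ℝ, 0 ≤ s → H s ∈ Set.Icc 0 a) ∧
      (∀ s t : ℝ, 0 ≤ s → 0 ≤ t → |H s - H t| ≤ |G s - G t|) := by
  have hφ : ∀ k, 1 ≤ k → φ k = reflectIter a k := fun k => eq_reflectIter hψ hφ1 hφsucc
  have hlip := lipschitzWith_reflectLimit ha
  refine ⟨fun r _ => ?_, reflectLimit a ∘ G, fun s _ => ?_,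
    (hlip.continuous.comp hG).continuousOn, fun s _ => reflectLimit_mem_Icc ha (G s),
    fun s t _ _ => by simpa [Real.dist_eq] using hlip.dist_le_mul (G s) (G t)⟩
  · obtain ⟨M, hM⟩ :=
      (isCompact_Icc (a := 0) (b := r)).exists_bound_of_continuousOn hG.continuousOn
    refine ⟨2 * ⌈M / a⌉₊ + 1, by omega, fun j s hs => ?_⟩
    have hGs : |G s| ≤ (2 * (⌈M / a⌉₊ : ℝ) + 1) * a :=
      (hM s hs).trans (le_two_mul_ceil_div_add_one_mul ha M)
    rw [hφ _ (by omega), hφ _ (by omega)]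
    exact reflectIter_eq_of_abs_le hGs (by omega)
  · exact (tendsto_reflectIter_reflectLimit ha (G s)).congr' <|
      (eventually_ge_atTop 1).mono fun k hk => by simp only [hφ k hk]

/-- Let `G : [0,∞) → ℝ` be continuous with `G 0 = 0`, `a > 0`.  With
`ψ_j(x) = |x|` for `j` odd and `ψ_j(x) = a − |x − a|` for `j` even, and
`φ_k = ψ_k ∘ ⋯ ∘ ψ_1`, for every `r > 0` there is `k` such that
`φ_{k+j}(G s) = φ_k(G s)` for all `0 ≤ s ≤ r`, `j ≥ 1`; hence
`H s := lim_k φ_k (G s)` exists, is continuous on `[0,∞)`, takes values in `[0,a]`, and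
satisfies `|H s − H t| ≤ |G s − G t|` (the trajectory `G` reflected into `[0,a]`). -/
theorem iterated_reflection_into_interval
    (a : ℝ) (ha : 0 < a)
    (G : ℝ → ℝ) (hG : Continuous G) (hG0 : G 0 = 0)
    (ψ : ℕ → ℝ → ℝ)
    (hψ : ∀ j x, ψ j x = if Odd j then |x| else a - |x - a|)
    (φ : ℕ → ℝ → ℝ)
    (hφ1 : ∀ x, φ 1 x = ψ 1 x)
    (hφsucc : ∀ k, 1 ≤ k → ∀ x, φ (k + 1) x = ψ (k + 1) (φ k x)) :
    (∀ r : ℝ, 0 < r → ∃ k : ℕ, 1 ≤ k ∧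
      ∀ j : ℕ, ∀ s ∈ Set.Icc (0 : ℝ) r, φ (k + j) (G s) = φ k (G s)) ∧
    ∃ H : ℝ → ℝ,
      (∀ s : ℝ, 0 ≤ s → Tendsto (fun k => φ k (G s)) atTop (nhds (H s))) ∧
      ContinuousOn H (Set.Ici 0) ∧
      (∀ s : ℝ, 0 ≤ s → H s ∈ Set.Icc 0 a) ∧
      (∀ s t : ℝ, 0 ≤ s → 0 ≤ t → |H s - H t| ≤ |G s - G t|) :=
  iterated_reflection_into_interval_general a ha G hG ψ hψ φ hφ1 hφsucc
end

section
/- Let H be a continuous piecewise linear function in 𝓗_p (slopes ±p, starting from 0 with slope +p, returning to 0 and stopped there, all local minima between consecutive zeros at distinct heights). Then the exploration bijection Φ_p, which associates to H the rooted binary tree obtained by reading local maxima as death times and local minima as birth times (splitting the excursion above each lowest local minimum into a left part for the parent and a right part for the child), is a bijection between 𝓗_p (modulo the horizontal spacing of branches) and the set 𝓣 of finite rooted binary chronological trees. -/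
/-!  STATEMENT 19: the bijection `Φ_p` between `𝓗_p` (exploration excursions, modulo the
horizontal spacing of branches) and the set `𝓣` of finite rooted binary chronological trees.

An element of `𝓗_p` modulo horizontal spacing is determined by the alternating sequence of
heights of its local maxima `M_1, …, M_n` and interior local minima `m_1, …, m_{n-1}`
(slopes `±p`, starting upward from `0` and returning to `0`, all local minima at distinct
heights).  We record it, relative to a base level `h` (`h = 0` for `𝓗_p` itself), as the
pair of lists of these heights.

A finite rooted binary chronological tree is recorded through the binary-splitting
representation used in the exploration: it is either a single lifetime segment ending at a
death height, or it splits at the (lowest) birth height `t` into a left part (the parent and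
its later progeny) and a right part (the first offspring and its progeny), both living above
level `t`; births occur one at a time, i.e. all split heights are distinct. -/

/-- An excursion of `𝓗_p` above a base level, modulo horizontal spacing: the list of heights
of its local maxima and the list of heights of its interior local minima. -/
structure Exc where
  maxima : List ℝ
  minima : List ℝ

/-- `e` is a valid excursion above the level `h`: there is at least one local maximum, one
fewer interior local minima than maxima, everything happens strictly above `h`, each interior
local minimum is below its two neighbouring local maxima, and all local minima are at
distinct heights. -/
def ValidExc (h : ℝ) (e : Exc) : Prop :=
  e.maxima ≠ [] ∧
  e.minima.length + 1 = e.maxima.length ∧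
  (∀ x ∈ e.maxima, h < x) ∧
  (∀ i < e.minima.length,
      h < e.minima.getD i 0 ∧
      e.minima.getD i 0 < e.maxima.getD i 0 ∧
      e.minima.getD i 0 < e.maxima.getD (i + 1) 0) ∧
  e.minima.Nodup

/-- Binary chronological trees in splitting representation: a lifetime segment ending at a
death height, or a split at a birth height into left (parent) and right (first offspring)
subtrees. -/
inductive BinTree : Type
  | leaf (death : ℝ) : BinTree
  | node (birth : ℝ) (left right : BinTree) : BinTree

/-- The list of split (birth) heights of a tree. -/
def BinTree.splits : BinTree → List ℝ
  | .leaf _ => []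
  | .node t l r => t :: (l.splits ++ r.splits)

/-- The tree `τ` is a valid chronological tree above level `h`: deaths and births happen
strictly above the level at which the corresponding individual is alive. -/
def ValidShape : ℝ → BinTree → Prop
  | h, .leaf d => h < d
  | h, .node t l r => h < t ∧ ValidShape t l ∧ ValidShape t r

/-- A valid binary chronological tree above level `h`: valid shape, and births occur one at a
time (all split heights distinct). -/
def ValidTree (h : ℝ) (τ : BinTree) : Prop :=
  ValidShape h τ ∧ τ.splits.Nodup


/-! The inverse of the exploration map is the contour map, which glues the contours of the two
subtrees of a split at height `t` through a new local minimum at `t`. Every split height of a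
valid tree lies strictly above the splits below it, so the junction `t` is the lowest local
minimum of the glued excursion and exploring a contour gives back the tree. Conversely, cutting a
valid excursion at its lowest local minimum (unique, since the minima are distinct) leaves two
valid excursions above that level, so by induction on the number of minima the contour of the
explored tree is the excursion again. -/

/-- The shape conditions of `ValidExc` without distinctness of the minima, in inductive form:
`M₀ > m₀ < M₁ > m₁ < ⋯ < Mₙ` with every `mᵢ` above `h`. -/
inductive AltChain : ℝ → List ℝ → List ℝ → Prop
  | single {h M : ℝ} : h < M → AltChain h [M] []
  | cons {h M m : ℝ} {Ms ms : List ℝ} : h < m → m < M → m < Ms.headD 0 →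
      AltChain h Ms ms → AltChain h (M :: Ms) (m :: ms)

namespace AltChain

variable {h t : ℝ} {M m : List ℝ}

theorem ne_nil (hc : AltChain h M m) : M ≠ [] := by
  cases hc <;> simp

theorem length_eq (hc : AltChain h M m) : m.length + 1 = M.length := by
  induction hc <;> simp_all

theorem lt_headD (hc : AltChain h M m) : h < M.headD 0 := by
  cases hc with
  | single hM => exact hM
  | cons hm hmM _ _ => exact hm.trans hmM

theorem lt_of_mem_minima (hc : AltChain h M m) : ∀ x ∈ m, h < x := by
  induction hc with
  | single => simp
  | cons hm _ _ _ ih => exact List.forall_mem_cons.mpr ⟨hm, ih⟩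

theorem lt_of_mem_maxima (hc : AltChain h M m) : ∀ x ∈ M, h < x := by
  induction hc with
  | single hM => simpa
  | cons hm hmM _ _ ih => exact List.forall_mem_cons.mpr ⟨hm.trans hmM, ih⟩

theorem cons_iff {M₀ m₀ : ℝ} {Ms ms : List ℝ} :
    AltChain h (M₀ :: Ms) (m₀ :: ms) ↔
      h < m₀ ∧ m₀ < M₀ ∧ m₀ < Ms.headD 0 ∧ AltChain h Ms ms := by
  constructor
  · rintro (_ | ⟨h₁, h₂, h₃, h₄⟩)
    exact ⟨h₁, h₂, h₃, h₄⟩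
  · rintro ⟨h₁, h₂, h₃, h₄⟩
    exact .cons h₁ h₂ h₃ h₄

theorem relevel (hc : AltChain h M m) (hM : t < M.headD 0) (hm : ∀ x ∈ m, t < x) :
    AltChain t M m := by
  induction hc with
  | single => exact .single hM
  | cons _ hmM hmMs _ ih =>
    obtain ⟨hm₀, hms⟩ := List.forall_mem_cons.mp hm
    exact .cons hm₀ hmM hmMs (ih (hm₀.trans hmMs) hms)

theorem append {Ml ml Mr mr : List ℝ} (ht : h < t) (hl : AltChain t Ml ml)
    (hr : AltChain t Mr mr) : AltChain h (Ml ++ Mr) (ml ++ t :: mr) := by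
  induction hl with
  | single hM =>
    exact .cons ht hM hr.lt_headD (hr.relevel (ht.trans hr.lt_headD)
      fun x hx => ht.trans (hr.lt_of_mem_minima x hx))
  | cons hm hmM hmMs hc ih =>
    obtain ⟨M', Ms', rfl⟩ := List.exists_cons_of_ne_nil hc.ne_nil
    exact .cons (ht.trans hm) hmM hmMs ih

theorem split {Ml ml Mr mr : List ℝ} (hc : AltChain h (Ml ++ Mr) (ml ++ t :: mr))
    (hlen : ml.length + 1 = Ml.length) (hml : ∀ x ∈ ml, t < x) (hmr : ∀ x ∈ mr, t < x) :
    h < t ∧ AltChain t Ml ml ∧ AltChain t Mr mr := by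
  induction ml generalizing Ml with
  | nil =>
    obtain ⟨M₀, rfl⟩ := List.length_eq_one_iff.mp hlen.symm
    obtain ⟨ht, hM₀, hMr, hcr⟩ := cons_iff.mp hc
    exact ⟨ht, .single hM₀, hcr.relevel hMr hmr⟩
  | cons m₀ ml ih =>
    obtain _ | ⟨M₀, Ml⟩ := Ml
    · simp at hlen
    obtain ⟨-, hm₀M₀, hm₀Ml, hc⟩ := cons_iff.mp hc
    obtain ⟨hm₀, hml⟩ := List.forall_mem_cons.mp hml
    obtain ⟨ht, hcl, hcr⟩ := ih hc (by simpa using hlen) hml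
    obtain ⟨M₁, Ml, rfl⟩ := List.exists_cons_of_ne_nil hcl.ne_nil
    exact ⟨ht, .cons hm₀ hm₀M₀ hm₀Ml hcl, hcr⟩

end AltChain

theorem altChain_iff {h : ℝ} {M m : List ℝ} :
    AltChain h M m ↔ M ≠ [] ∧ m.length + 1 = M.length ∧ (∀ x ∈ M, h < x) ∧
      ∀ i < m.length, h < m.getD i 0 ∧ m.getD i 0 < M.getD i 0 ∧
        m.getD i 0 < M.getD (i + 1) 0 := by
  induction m generalizing M with
  | nil =>
    constructor
    · intro hc
      exact ⟨hc.ne_nil, hc.length_eq, hc.lt_of_mem_maxima, by simp⟩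
    · rintro ⟨-, hlen, hM, -⟩
      obtain ⟨M₀, rfl⟩ := List.length_eq_one_iff.mp hlen.symm
      exact .single (hM M₀ (by simp))
  | cons m₀ ms ih =>
    obtain _ | ⟨M₀, Ms⟩ := M
    · simp only [ne_eq, not_true_eq_false, false_and, iff_false]
      rintro ⟨⟩
    rw [AltChain.cons_iff, ih]
    simp only [List.forall_mem_cons, List.length_cons, Nat.forall_lt_succ_left,
      List.getD_cons_zero, List.getD_cons_succ, List.headD_eq_getD]
    constructor
    · rintro ⟨hm₀, hm₀M₀, hm₀Ms, -, hlen, hMs, hms⟩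
      exact ⟨List.cons_ne_nil _ _, by omega, ⟨hm₀.trans hm₀M₀, hMs⟩, ⟨hm₀, hm₀M₀, hm₀Ms⟩, hms⟩
    · rintro ⟨-, hlen, ⟨-, hMs⟩, ⟨hm₀, hm₀M₀, hm₀Ms⟩, hms⟩
      exact ⟨hm₀, hm₀M₀, hm₀Ms, List.ne_nil_of_length_pos (by omega), by omega, hMs, hms⟩

theorem validExc_iff {h : ℝ} {e : Exc} :
    ValidExc h e ↔ AltChain h e.maxima e.minima ∧ e.minima.Nodup := by
  rw [altChain_iff]
  simp only [ValidExc, and_assoc]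

def Exc.join (l : Exc) (t : ℝ) (r : Exc) : Exc :=
  ⟨l.maxima ++ r.maxima, l.minima ++ t :: r.minima⟩

def Exc.leftPart (e : Exc) (i : ℕ) : Exc :=
  ⟨e.maxima.take (i + 1), e.minima.take i⟩

def Exc.rightPart (e : Exc) (i : ℕ) : Exc :=
  ⟨e.maxima.drop (i + 1), e.minima.drop (i + 1)⟩

theorem Exc.join_leftPart_rightPart {e : Exc} {i : ℕ} (hi : i < e.minima.length) :
    (e.leftPart i).join e.minima[i] (e.rightPart i) = e := by
  simp only [Exc.join, Exc.leftPart, Exc.rightPart, List.take_append_drop,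
    ← List.drop_eq_getElem_cons hi]

theorem Exc.leftPart_join {l r : Exc} {t : ℝ} (hl : l.minima.length + 1 = l.maxima.length) :
    (l.join t r).leftPart l.minima.length = l := by
  simp only [Exc.join, Exc.leftPart, List.take_left' hl.symm, List.take_left]

theorem Exc.rightPart_join {l r : Exc} {t : ℝ} (hl : l.minima.length + 1 = l.maxima.length) :
    (l.join t r).rightPart l.minima.length = r := by
  have hsplit : l.minima ++ t :: r.minima = (l.minima ++ [t]) ++ r.minima := by simp
  simp only [Exc.join, Exc.rightPart, List.drop_left' hl.symm, hsplit]
  rw [List.drop_left' (by simp)]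

noncomputable def explore (e : Exc) : BinTree :=
  if hne : e.minima = [] then .leaf (e.maxima.headD 0)
  else
    let i := e.minima.idxOf (e.minima.min hne)
    .node (e.minima.min hne) (explore (e.leftPart i)) (explore (e.rightPart i))
termination_by e.minima.length
decreasing_by
  all_goals
    have := List.idxOf_lt_length_iff.mpr (List.min_mem hne)
    simp only [Exc.leftPart, Exc.rightPart, List.length_take, List.length_drop]
    omega

theorem explore_of_minima_eq_nil {e : Exc} (he : e.minima = []) :
    explore e = .leaf (e.maxima.headD 0) := by
  rw [explore, dif_pos he]

theorem explore_join {l r : Exc} {t : ℝ} (hlen : l.minima.length + 1 = l.maxima.length)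
    (hl : ∀ x ∈ l.minima, t < x) (hr : ∀ x ∈ r.minima, t < x) :
    explore (l.join t r) = .node t (explore l) (explore r) := by
  have hne : (l.join t r).minima ≠ [] := by simp [Exc.join]
  have hmin : (l.join t r).minima.min hne = t := by
    refine (List.min_eq_iff hne).mpr ⟨by simp [Exc.join], fun x hx => ?_⟩
    simp only [Exc.join, List.mem_append, List.mem_cons] at hx
    rcases hx with hx | rfl | hx
    exacts [(hl x hx).le, le_rfl, (hr x hx).le]
  have hidx : (l.join t r).minima.idxOf t = l.minima.length := by
    simp only [Exc.join]
    rw [List.idxOf_append_of_notMem fun ht => (hl t ht).false, List.idxOf_cons_self]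
    rfl
  rw [explore, dif_neg hne]
  simp only [hmin, hidx, Exc.leftPart_join hlen, Exc.rightPart_join hlen]

theorem ValidExc.of_join {h t : ℝ} {l r : Exc} (hv : ValidExc h (l.join t r))
    (hlen : l.minima.length + 1 = l.maxima.length) (hmin : ∀ x ∈ (l.join t r).minima, t ≤ x) :
    h < t ∧ ValidExc t l ∧ ValidExc t r := by
  obtain ⟨hc, hnd⟩ := validExc_iff.mp hv
  obtain ⟨htlr, hndlr⟩ := List.nodup_cons.mp (List.nodup_middle.mp hnd)
  have hlt : ∀ x ∈ l.minima ++ r.minima, t < x := fun x hx =>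
    (hmin x (List.perm_middle.symm.subset (List.mem_cons_of_mem t hx))).lt_of_ne
      (by rintro rfl; exact htlr hx)
  obtain ⟨ht, hcl, hcr⟩ := hc.split hlen (fun x hx => hlt x (List.mem_append_left _ hx))
    (fun x hx => hlt x (List.mem_append_right _ hx))
  exact ⟨ht, validExc_iff.mpr ⟨hcl, hndlr.of_append_left⟩,
    validExc_iff.mpr ⟨hcr, hndlr.of_append_right⟩⟩

theorem ValidExc.split {h : ℝ} {e : Exc} {i : ℕ} (hv : ValidExc h e) (hi : i < e.minima.length)
    (hmin : ∀ x ∈ e.minima, e.minima[i] ≤ x) :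
    h < e.minima[i] ∧ ValidExc e.minima[i] (e.leftPart i) ∧
      ValidExc e.minima[i] (e.rightPart i) := by
  have he := Exc.join_leftPart_rightPart hi
  refine ValidExc.of_join (by rwa [he]) ?_ (by rwa [he])
  have hlen := (validExc_iff.mp hv).1.length_eq
  simp only [Exc.leftPart, List.length_take]
  omega

theorem explore_eq_node {h : ℝ} {e : Exc} {i : ℕ} (hv : ValidExc h e)
    (hi : i < e.minima.length) (hmin : ∀ x ∈ e.minima, e.minima[i] ≤ x) :
    explore e = .node e.minima[i] (explore (e.leftPart i)) (explore (e.rightPart i)) := by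
  obtain ⟨-, hl, hr⟩ := hv.split hi hmin
  conv_lhs => rw [← Exc.join_leftPart_rightPart hi]
  exact explore_join (validExc_iff.mp hl).1.length_eq (validExc_iff.mp hl).1.lt_of_mem_minima
    (validExc_iff.mp hr).1.lt_of_mem_minima

def contour : BinTree → Exc
  | .leaf d => ⟨[d], []⟩
  | .node t l r => (contour l).join t (contour r)

theorem contour_minima_perm_splits (τ : BinTree) : (contour τ).minima.Perm τ.splits := by
  induction τ with
  | leaf => exact .nil
  | node t l r ihl ihr => exact List.perm_middle.trans ((ihl.append ihr).cons t)

theorem ValidShape.lt_of_mem_splits {h : ℝ} {τ : BinTree} (hτ : ValidShape h τ) :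
    ∀ x ∈ τ.splits, h < x := by
  induction τ generalizing h with
  | leaf => simp [BinTree.splits]
  | node t l r ihl ihr =>
    obtain ⟨ht, hl, hr⟩ := hτ
    simp only [BinTree.splits, List.forall_mem_cons, List.forall_mem_append]
    exact ⟨ht, fun x hx => ht.trans (ihl hl x hx), fun x hx => ht.trans (ihr hr x hx)⟩

theorem ValidShape.altChain_contour {h : ℝ} {τ : BinTree} (hτ : ValidShape h τ) :
    AltChain h (contour τ).maxima (contour τ).minima := by
  induction τ generalizing h with
  | leaf => exact .single hτ
  | node t l r ihl ihr => exact .append hτ.1 (ihl hτ.2.1) (ihr hτ.2.2)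

theorem ValidTree.validExc_contour {h : ℝ} {τ : BinTree} (hτ : ValidTree h τ) :
    ValidExc h (contour τ) :=
  validExc_iff.mpr ⟨hτ.1.altChain_contour, (contour_minima_perm_splits τ).nodup_iff.mpr hτ.2⟩

theorem ValidTree.explore_contour {h : ℝ} {τ : BinTree} (hτ : ValidTree h τ) :
    explore (contour τ) = τ := by
  induction τ generalizing h with
  | leaf => exact explore_of_minima_eq_nil rfl
  | node t l r ihl ihr =>
    obtain ⟨⟨-, hl, hr⟩, hnd⟩ := hτ
    obtain ⟨-, hndlr⟩ := List.nodup_cons.mp hnd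
    have hminima (σ : BinTree) (hσ : ValidShape t σ) : ∀ x ∈ (contour σ).minima, t < x :=
      fun x hx => hσ.lt_of_mem_splits x ((contour_minima_perm_splits σ).subset hx)
    rw [contour, explore_join hl.altChain_contour.length_eq (hminima l hl) (hminima r hr),
      ihl ⟨hl, hndlr.of_append_left⟩, ihr ⟨hr, hndlr.of_append_right⟩]

theorem ValidExc.validShape_explore_and_contour_explore {h : ℝ} {e : Exc} (hv : ValidExc h e) :
    ValidShape h (explore e) ∧ contour (explore e) = e := by
  by_cases hne : e.minima = []
  · obtain ⟨maxima, minima⟩ := e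
    obtain rfl : minima = [] := hne
    rw [explore_of_minima_eq_nil rfl]
    obtain ⟨⟨hM⟩, -⟩ := validExc_iff.mp hv
    exact ⟨hM, rfl⟩
  · obtain ⟨i, hi, hmi⟩ := List.mem_iff_getElem.mp (List.min_mem hne)
    have hmin : ∀ x ∈ e.minima, e.minima[i] ≤ x := fun x hx => hmi ▸ List.min_le_of_mem hx
    obtain ⟨ht, hl, hr⟩ := hv.split hi hmin
    obtain ⟨hsl, hcl⟩ := hl.validShape_explore_and_contour_explore
    obtain ⟨hsr, hcr⟩ := hr.validShape_explore_and_contour_explore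
    rw [explore_eq_node hv hi hmin]
    exact ⟨⟨ht, hsl, hsr⟩, by rw [contour, hcl, hcr, Exc.join_leftPart_rightPart hi]⟩
termination_by e.minima.length
decreasing_by
  all_goals
    simp only [Exc.leftPart, Exc.rightPart, List.length_take, List.length_drop]
    omega

theorem ValidExc.contour_explore {h : ℝ} {e : Exc} (hv : ValidExc h e) :
    contour (explore e) = e :=
  hv.validShape_explore_and_contour_explore.2

theorem ValidExc.validTree_explore {h : ℝ} {e : Exc} (hv : ValidExc h e) :
    ValidTree h (explore e) := by
  refine ⟨hv.validShape_explore_and_contour_explore.1, ?_⟩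
  rw [← (contour_minima_perm_splits _).nodup_iff, hv.contour_explore]
  exact (validExc_iff.mp hv).2

/-- there is a map `Φ` which, for every base level `h`, is a bijection from the
excursions of `𝓗_p` above `h` (modulo horizontal spacing) onto the binary chronological
trees above `h`, and which is given by the exploration procedure: if the excursion has no
interior local minimum, the tree is a single individual dying at the unique local maximum
height; otherwise, the lowest local minimum `m` is the first birth height, the part of the
excursion left of it (viewed above level `m`) codes the parent and the rest of its progeny,
and the part right of it codes the first offspring and its progeny.  In particular (`h = 0`)
`Φ_p` is a bijection between `𝓗_p` modulo horizontal spacing and `𝓣`. -/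
theorem exploration_bijection :
    ∃ Φ : ℝ → Exc → BinTree,
      (∀ h : ℝ, Set.BijOn (Φ h) {e | ValidExc h e} {τ | ValidTree h τ}) ∧
      (∀ h : ℝ, ∀ e : Exc, ValidExc h e →
        (e.minima = [] → Φ h e = BinTree.leaf (e.maxima.headD 0)) ∧
        (∀ i < e.minima.length,
          (∀ x ∈ e.minima, e.minima.getD i 0 ≤ x) →
          Φ h e = BinTree.node (e.minima.getD i 0)
            (Φ (e.minima.getD i 0) ⟨e.maxima.take (i + 1), e.minima.take i⟩)
            (Φ (e.minima.getD i 0) ⟨e.maxima.drop (i + 1), e.minima.drop (i + 1)⟩))) := by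
  refine ⟨fun _ => explore, fun h => ?_, fun h e hv => ⟨explore_of_minima_eq_nil, ?_⟩⟩
  · exact Set.InvOn.bijOn (f' := contour)
      ⟨fun _ hv => ValidExc.contour_explore hv, fun _ hτ => ValidTree.explore_contour hτ⟩
      (fun _ hv => ValidExc.validTree_explore hv) (fun _ hτ => ValidTree.validExc_contour hτ)
  · intro i hi hmin
    simp only [List.getD_eq_getElem _ _ hi] at hmin ⊢
    exact explore_eq_node hv hi hmin
end
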